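/- arXiv:1709.05194 — 7 statements merged into one kernel-verified Lean document; each statement's English description precedes it below -/
import Mathlib

section
/- For every y > 0, one has y^2 · ϑ₄'(y)/ϑ₄(y) = 2 y^2 ∑_{n=1}^{∞} ( nπ/(e^{2nπy} − 1) + (2n−1)π/(e^{(2n−1)πy} − 1) ). -/
/-!
With `q = e^{-πy}`, `ϑ₄(y) = ∑_j (-1)^j q^{j²}`, and Gauss's identity (the Jacobi triple product
at `z = -1`) gives `ϑ₄(y) = ∏_{n ≥ 0} (1 - q^{2n+2}) (1 - q^{2n+1})²`. That identity is the limit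
`N → ∞` of the finite identity `∑_j (-1)^j [2N, N+j]_{q²} q^{j²} = ∏_{n<N} (1 - q^{2n+1})²`,
proved by induction on `N` from the `q`-Pascal rules; the Gaussian binomials tend to
`1 / (q²; q²)_∞` and are bounded uniformly, so dominated convergence applies.
Hence `log ϑ₄(y) = ∑_n (log (1 - e^{-a_n y}) + 2 log (1 - e^{-b_n y}))` with `a_n = 2(n+1)π`,
`b_n = (2n+1)π`; differentiating termwise, each `log (1 - e^{-a y})` contributes `a / (e^{ay} - 1)`,
which is `O(a⁻² y⁻³)` and so summable locally uniformly in `y > 0`.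
-/

/-- The Jacobi theta function ϑ₄, defined for real `y` by
`ϑ₄(y) = ∑_{k ∈ ℤ} (−1)^k e^{−π k² y}`. -/
noncomputable def theta4 (y : ℝ) : ℝ :=
  ∑' k : ℤ, (-1 : ℝ) ^ k * Real.exp (-Real.pi * (k : ℝ) ^ 2 * y)

open Finset Function

variable {K : Type*} [Field K]

-- `qPochhammer Q n` is the q-Pochhammer symbol `(Q; Q)_n`.
def qPochhammer (Q : K) (n : ℕ) : K := ∏ i ∈ range n, (1 - Q ^ (i + 1))

-- Extended by zero outside `0 ≤ k ≤ n`, so that the `q`-Pascal rules hold for all `k : ℤ`.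
def gaussianBinomial (Q : K) (n : ℕ) (k : ℤ) : K :=
  if 0 ≤ k ∧ k ≤ n then qPochhammer Q n / (qPochhammer Q k.toNat * qPochhammer Q (n - k.toNat))
  else 0

section GaussianBinomial

variable {Q : K} {n : ℕ} {k : ℤ}

theorem qPochhammer_zero : qPochhammer Q 0 = 1 := prod_range_zero _

theorem qPochhammer_succ : qPochhammer Q (n + 1) = qPochhammer Q n * (1 - Q ^ (n + 1)) :=
  prod_range_succ _ n

theorem qPochhammer_ne_zero (hQ : ∀ m : ℕ, Q ^ (m + 1) ≠ 1) (n : ℕ) : qPochhammer Q n ≠ 0 :=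
  prod_ne_zero_iff.2 fun i _ => sub_ne_zero.2 (hQ i).symm

theorem gaussianBinomial_of_neg (hk : k < 0) : gaussianBinomial Q n k = 0 :=
  if_neg fun h => by omega

theorem gaussianBinomial_of_lt (hk : (n : ℤ) < k) : gaussianBinomial Q n k = 0 :=
  if_neg fun h => by omega

theorem gaussianBinomial_add_left (a b : ℕ) :
    gaussianBinomial Q (a + b) a = qPochhammer Q (a + b) / (qPochhammer Q a * qPochhammer Q b) := by
  rw [gaussianBinomial, if_pos (by omega), Int.toNat_natCast, Nat.add_sub_cancel_left]

theorem gaussianBinomial_zero_right (hQ : ∀ m : ℕ, Q ^ (m + 1) ≠ 1) (n : ℕ) :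
    gaussianBinomial Q n 0 = 1 := by
  have := gaussianBinomial_add_left (Q := Q) 0 n
  rw [zero_add, qPochhammer_zero, one_mul, div_self (qPochhammer_ne_zero hQ n)] at this
  exact_mod_cast this

theorem gaussianBinomial_self (hQ : ∀ m : ℕ, Q ^ (m + 1) ≠ 1) (n : ℕ) :
    gaussianBinomial Q n n = 1 := by
  have := gaussianBinomial_add_left (Q := Q) n 0
  rwa [add_zero, qPochhammer_zero, mul_one, div_self (qPochhammer_ne_zero hQ n)] at this

theorem gaussianBinomial_symm (n : ℕ) (k : ℤ) :
    gaussianBinomial Q n (n - k) = gaussianBinomial Q n k := by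
  by_cases hk : 0 ≤ k ∧ k ≤ n
  · obtain ⟨a, rfl⟩ := Int.eq_ofNat_of_zero_le hk.1
    obtain ⟨b, rfl⟩ := Nat.exists_eq_add_of_le (Int.ofNat_le.1 hk.2)
    rw [show ((a + b : ℕ) : ℤ) - a = (b : ℕ) by omega, add_comm a b, gaussianBinomial_add_left,
      add_comm b a, gaussianBinomial_add_left, mul_comm]
  · rw [gaussianBinomial, gaussianBinomial, if_neg (by omega), if_neg hk]

theorem gaussianBinomial_succ (hQ : ∀ m : ℕ, Q ^ (m + 1) ≠ 1) (n : ℕ) (k : ℤ) :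
    gaussianBinomial Q (n + 1) k =
      gaussianBinomial Q n (k - 1) + Q ^ k * gaussianBinomial Q n k := by
  rcases lt_trichotomy k 0 with hk | rfl | hk
  · simp [gaussianBinomial_of_neg hk, gaussianBinomial_of_neg (show k - 1 < 0 by omega)]
  · simp [gaussianBinomial_zero_right hQ, gaussianBinomial_of_neg (show (-1 : ℤ) < 0 by omega)]
  rcases lt_trichotomy k (n + 1) with hkn | rfl | hkn
  · obtain ⟨b, rfl⟩ : ∃ b : ℕ, k = b + 1 := ⟨(k - 1).toNat, by omega⟩
    obtain ⟨c, rfl⟩ : ∃ c : ℕ, n = b + c + 1 := ⟨n - b - 1, by omega⟩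
    have hb := gaussianBinomial_add_left (Q := Q) (b + 1) (c + 1)
    have hb' := gaussianBinomial_add_left (Q := Q) b (c + 1)
    have hb'' := gaussianBinomial_add_left (Q := Q) (b + 1) c
    rw [show b + 1 + (c + 1) = b + c + 1 + 1 by ring] at hb
    rw [← add_assoc] at hb'
    rw [add_right_comm] at hb''
    push_cast at hb hb' hb'' ⊢
    rw [add_sub_cancel_right, hb, hb', hb'', show (b : ℤ) + 1 = (b + 1 : ℕ) by push_cast; ring,
      zpow_natCast]
    simp only [qPochhammer_succ]
    have := qPochhammer_ne_zero hQ
    have h1 := sub_ne_zero.2 (hQ b).symm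
    have h2 := sub_ne_zero.2 (hQ c).symm
    -- `1 - Q ^ (b + c + 2) = (1 - Q ^ (b + 1)) + Q ^ (b + 1) * (1 - Q ^ (c + 1))`
    field_simp
    ring
  · rw [show (n : ℤ) + 1 = (n + 1 : ℕ) by push_cast; ring, gaussianBinomial_self hQ,
      Nat.cast_succ, add_sub_cancel_right, gaussianBinomial_self hQ,
      gaussianBinomial_of_lt (by omega), mul_zero, add_zero]
  · rw [gaussianBinomial_of_lt (by omega), gaussianBinomial_of_lt (by omega),
      gaussianBinomial_of_lt (by omega), mul_zero, add_zero]

theorem gaussianBinomial_succ' (hQ : ∀ m : ℕ, Q ^ (m + 1) ≠ 1) (n : ℕ) (k : ℤ) :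
    gaussianBinomial Q (n + 1) k =
      Q ^ ((n : ℤ) + 1 - k) * gaussianBinomial Q n (k - 1) + gaussianBinomial Q n k := by
  rw [← gaussianBinomial_symm, gaussianBinomial_succ hQ, ← gaussianBinomial_symm n (k - 1),
    ← gaussianBinomial_symm n k]
  push_cast
  ring_nf

theorem gaussianBinomial_add_two (hQ₀ : Q ≠ 0) (hQ : ∀ m : ℕ, Q ^ (m + 1) ≠ 1) (n : ℕ) (k : ℤ) :
    gaussianBinomial Q (n + 2) k =
      Q ^ ((n : ℤ) + 2 - k) * gaussianBinomial Q n (k - 2) +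
        (1 + Q ^ (n + 1)) * gaussianBinomial Q n (k - 1) + Q ^ k * gaussianBinomial Q n k := by
  have hQk : Q ^ k * Q ^ ((n : ℤ) + 1 - k) = Q ^ (n + 1) := by
    rw [← zpow_add₀ hQ₀, add_sub_cancel, ← zpow_natCast]; push_cast; rfl
  rw [gaussianBinomial_succ hQ, gaussianBinomial_succ' hQ, gaussianBinomial_succ' hQ,
    sub_sub, show (k - (1 + 1)) = k - 2 by ring, show (n : ℤ) + 1 - (k - 1) = n + 2 - k by ring]
  linear_combination gaussianBinomial Q n (k - 1) * hQk

end GaussianBinomial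

def thetaTerm (q : K) (N : ℕ) (j : ℤ) : K :=
  (-1) ^ j * gaussianBinomial (q ^ 2) (2 * N) (N + j) * q ^ (j ^ 2)

section ThetaTerm

variable {q : K}

theorem hasFiniteSupport_thetaTerm (N : ℕ) : HasFiniteSupport (thetaTerm q N) := by
  refine (Set.finite_Icc (-(N : ℤ)) N).subset (support_subset_iff'.2 fun j hj => ?_)
  rw [Set.mem_Icc, not_and_or, not_le, not_le] at hj
  rcases hj with hj | hj
  · rw [thetaTerm, gaussianBinomial_of_neg (by omega), mul_zero, zero_mul]
  · rw [thetaTerm, gaussianBinomial_of_lt (by push_cast; omega), mul_zero, zero_mul]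

theorem thetaTerm_succ (hq₀ : q ≠ 0) (hq : ∀ m : ℕ, (q ^ 2) ^ (m + 1) ≠ 1) (N : ℕ) (j : ℤ) :
    thetaTerm q (N + 1) j = (1 + (q ^ 2) ^ (2 * N + 1)) * thetaTerm q N j -
      q ^ (2 * N + 1) * (thetaTerm q N (j - 1) + thetaTerm q N (j + 1)) := by
  have hpow : ∀ m : ℤ,
      (q ^ 2) ^ m * q ^ (j ^ 2) = q ^ (2 * N + 1) * q ^ (2 * m + j ^ 2 - 2 * N - 1) := fun m => by
    rw [← zpow_natCast, ← zpow_natCast q, ← zpow_mul, ← zpow_add₀ hq₀, ← zpow_add₀ hq₀]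
    congr 1; push_cast; ring
  have hA := hpow (N + 1 - j)
  have hC := hpow (N + (j + 1))
  rw [show 2 * ((N : ℤ) + 1 - j) + j ^ 2 - 2 * N - 1 = (j - 1) ^ 2 by ring] at hA
  rw [show 2 * ((N : ℤ) + (j + 1)) + j ^ 2 - 2 * N - 1 = (j + 1) ^ 2 by ring] at hC
  have hsA : (-1 : K) ^ j + (-1) ^ (j - 1) = 0 := by
    rw [zpow_sub_one₀ (by norm_num)]; ring
  have hsC : (-1 : K) ^ j + (-1) ^ (j + 1) = 0 := by
    rw [zpow_add_one₀ (by norm_num)]; ring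
  simp only [thetaTerm]
  rw [show 2 * (N + 1) = 2 * N + 2 by ring, Nat.cast_succ,
    gaussianBinomial_add_two (pow_ne_zero 2 hq₀) hq (2 * N) (N + 1 + j),
    show ((2 * N : ℕ) : ℤ) + 2 - (N + 1 + j) = N + 1 - j by push_cast; ring,
    show (N : ℤ) + 1 + j - 2 = N + (j - 1) by ring, show (N : ℤ) + 1 + j - 1 = N + j by ring,
    show (N : ℤ) + 1 + j = N + (j + 1) by ring]
  set G₁ := gaussianBinomial (q ^ 2) (2 * N) (N + (j - 1))
  set G₃ := gaussianBinomial (q ^ 2) (2 * N) (N + (j + 1))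
  linear_combination (-1) ^ j * G₁ * hA + (-1) ^ j * G₃ * hC +
    G₁ * q ^ (2 * N + 1) * q ^ ((j - 1) ^ 2) * hsA + G₃ * q ^ (2 * N + 1) * q ^ ((j + 1) ^ 2) * hsC

theorem finsum_thetaTerm (hq₀ : q ≠ 0) (hq : ∀ m : ℕ, (q ^ 2) ^ (m + 1) ≠ 1) (N : ℕ) :
    ∑ᶠ j, thetaTerm q N j = ∏ n ∈ range N, (1 - q ^ (2 * n + 1)) ^ 2 := by
  induction N with
  | zero =>
    rw [finsum_eq_single _ 0 fun j hj => ?_, prod_range_zero]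
    · simp [thetaTerm, gaussianBinomial_zero_right hq]
    · rcases hj.lt_or_gt with hj | hj
      · rw [thetaTerm, gaussianBinomial_of_neg (by simpa), mul_zero, zero_mul]
      · rw [thetaTerm, gaussianBinomial_of_lt (by simpa), mul_zero, zero_mul]
  | succ N ih =>
    have hT := hasFiniteSupport_thetaTerm (q := q) N
    have hT₁ : HasFiniteSupport fun j => thetaTerm q N (j - 1) :=
      hT.comp_of_injective (sub_left_injective (b := 1))
    have hT₂ : HasFiniteSupport fun j => thetaTerm q N (j + 1) :=
      hT.comp_of_injective (add_left_injective 1)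
    have hS₁ : ∑ᶠ j, thetaTerm q N (j - 1) = ∑ᶠ j, thetaTerm q N j :=
      finsum_comp_equiv (Equiv.subRight 1)
    have hS₂ : ∑ᶠ j, thetaTerm q N (j + 1) = ∑ᶠ j, thetaTerm q N j :=
      finsum_comp_equiv (Equiv.addRight 1)
    simp_rw [thetaTerm_succ hq₀ hq]
    rw [finsum_sub_distrib (by fun_prop) (by fun_prop), ← mul_finsum, ← mul_finsum,
      finsum_add_distrib hT₁ hT₂, hS₁, hS₂, ih, prod_range_succ]
    ring

end ThetaTerm

open Filter Topology Real

theorem summable_log_one_sub_of_summable {ι : Type*} {g : ι → ℝ} (hg : Summable g) :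
    Summable fun i => log (1 - g i) := by
  simpa only [sub_eq_add_neg] using Real.summable_log_one_add_of_summable hg.neg

theorem hasProd_one_sub_of_summable {ι : Type*} {g : ι → ℝ} (hg₁ : ∀ i, g i < 1)
    (hg : Summable g) : HasProd (fun i => 1 - g i) (exp (∑' i, log (1 - g i))) :=
  Real.hasProd_of_hasSum_log (fun i => sub_pos.2 (hg₁ i))
    (summable_log_one_sub_of_summable hg).hasSum

noncomputable def qPochhammerInf (Q : ℝ) : ℝ := ∏' n : ℕ, (1 - Q ^ (n + 1))

section RealGaussianBinomial

variable {Q : ℝ}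

theorem summable_pow_succ (hQ₀ : 0 ≤ Q) (hQ₁ : Q < 1) : Summable fun n : ℕ => Q ^ (n + 1) :=
  (summable_nat_add_iff 1).2 (summable_geometric_of_lt_one hQ₀ hQ₁)

theorem qPochhammerInf_eq_exp (hQ₀ : 0 ≤ Q) (hQ₁ : Q < 1) :
    qPochhammerInf Q = exp (∑' n : ℕ, log (1 - Q ^ (n + 1))) :=
  (hasProd_one_sub_of_summable (fun n => pow_lt_one₀ hQ₀ hQ₁ n.succ_ne_zero)
    (summable_pow_succ hQ₀ hQ₁)).tprod_eq

theorem hasProd_qPochhammerInf (hQ₀ : 0 ≤ Q) (hQ₁ : Q < 1) :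
    HasProd (fun n : ℕ => 1 - Q ^ (n + 1)) (qPochhammerInf Q) := by
  rw [qPochhammerInf_eq_exp hQ₀ hQ₁]
  exact hasProd_one_sub_of_summable (fun n => pow_lt_one₀ hQ₀ hQ₁ n.succ_ne_zero)
    (summable_pow_succ hQ₀ hQ₁)

theorem qPochhammerInf_pos (hQ₀ : 0 ≤ Q) (hQ₁ : Q < 1) : 0 < qPochhammerInf Q :=
  qPochhammerInf_eq_exp hQ₀ hQ₁ ▸ exp_pos _

theorem tendsto_qPochhammer (hQ₀ : 0 ≤ Q) (hQ₁ : Q < 1) :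
    Tendsto (qPochhammer Q) atTop (𝓝 (qPochhammerInf Q)) :=
  (hasProd_qPochhammerInf hQ₀ hQ₁).tendsto_prod_nat

theorem qPochhammer_pos (hQ₀ : 0 ≤ Q) (hQ₁ : Q < 1) (n : ℕ) : 0 < qPochhammer Q n :=
  prod_pos fun i _ => sub_pos.2 (pow_lt_one₀ hQ₀ hQ₁ i.succ_ne_zero)

theorem antitone_qPochhammer (hQ₀ : 0 ≤ Q) (hQ₁ : Q < 1) : Antitone (qPochhammer Q) :=
  antitone_nat_of_succ_le fun n => by
    rw [qPochhammer_succ]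
    exact mul_le_of_le_one_right (qPochhammer_pos hQ₀ hQ₁ n).le
      (sub_le_self _ (pow_nonneg hQ₀ _))

theorem qPochhammerInf_le_qPochhammer (hQ₀ : 0 ≤ Q) (hQ₁ : Q < 1) (n : ℕ) :
    qPochhammerInf Q ≤ qPochhammer Q n :=
  (antitone_qPochhammer hQ₀ hQ₁).le_of_tendsto (tendsto_qPochhammer hQ₀ hQ₁) n

theorem gaussianBinomial_nonneg (hQ₀ : 0 ≤ Q) (hQ₁ : Q < 1) (n : ℕ) (k : ℤ) :
    0 ≤ gaussianBinomial Q n k := by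
  have hD := qPochhammer_pos hQ₀ hQ₁
  unfold gaussianBinomial
  split_ifs
  · exact (div_pos (hD _) (mul_pos (hD _) (hD _))).le
  · exact le_rfl

theorem gaussianBinomial_le (hQ₀ : 0 ≤ Q) (hQ₁ : Q < 1) (n : ℕ) (k : ℤ) :
    gaussianBinomial Q n k ≤ (qPochhammerInf Q ^ 2)⁻¹ := by
  have hP := qPochhammerInf_pos hQ₀ hQ₁
  have hD := qPochhammer_pos hQ₀ hQ₁
  have hle := qPochhammerInf_le_qPochhammer hQ₀ hQ₁
  unfold gaussianBinomial
  split_ifs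
  · rw [inv_eq_one_div, sq]
    exact div_le_div₀ zero_le_one
      ((antitone_qPochhammer hQ₀ hQ₁ n.zero_le).trans_eq qPochhammer_zero) (by positivity)
      (mul_le_mul (hle _) (hle _) hP.le (hD _).le)
  · positivity

theorem tendsto_gaussianBinomial_central (hQ₀ : 0 ≤ Q) (hQ₁ : Q < 1) (j : ℤ) :
    Tendsto (fun N : ℕ => gaussianBinomial Q (2 * N) (N + j)) atTop (𝓝 (qPochhammerInf Q)⁻¹) := by
  have hP := qPochhammerInf_pos hQ₀ hQ₁
  have hlim := tendsto_qPochhammer hQ₀ hQ₁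
  have hshift : ∀ e : ℤ, Tendsto (fun N : ℕ => (N + e).toNat) atTop atTop := fun e =>
    tendsto_atTop_atTop.2 fun b => ⟨b + e.natAbs, fun N hN => by omega⟩
  have := (hlim.comp (tendsto_id.const_mul_atTop' two_pos)).div
    ((hlim.comp (hshift j)).mul (hlim.comp (hshift (-j)))) (by positivity)
  rw [← sq, sq, div_mul_cancel_left₀ hP.ne'] at this
  refine this.congr' ?_
  filter_upwards [eventually_ge_atTop j.natAbs] with N hN
  rw [gaussianBinomial, if_pos (by omega)]
  change qPochhammer Q (2 * N) / (qPochhammer Q (N + j).toNat * qPochhammer Q (N + -j).toNat) = _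
  congr 3
  omega

end RealGaussianBinomial

theorem summable_pow_two_mul_add {q : ℝ} (hq₀ : 0 ≤ q) (hq₁ : q < 1) (c : ℕ) :
    Summable fun n : ℕ => q ^ (2 * n + c) :=
  .of_nonneg_of_le (fun n => by positivity)
    (fun n => pow_le_pow_of_le_one hq₀ hq₁.le (by omega)) (summable_geometric_of_lt_one hq₀ hq₁)

theorem summable_zpow_sq {q : ℝ} (hq₀ : 0 ≤ q) (hq₁ : q < 1) :
    Summable fun j : ℤ => q ^ (j ^ 2) := by
  have h : Summable fun n : ℕ => q ^ ((n : ℤ) ^ 2) := by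
    refine Summable.of_nonneg_of_le (fun n => by positivity) (fun n => ?_)
      (summable_geometric_of_lt_one hq₀ hq₁)
    rw [← Nat.cast_pow, zpow_natCast]
    exact pow_le_pow_of_le_one hq₀ hq₁.le (Nat.le_self_pow two_ne_zero n)
  exact .of_nat_of_neg h (by simpa only [neg_sq] using h)

theorem tendsto_tsum_thetaTerm {q : ℝ} (hq₀ : 0 < q) (hq₁ : q < 1) :
    Tendsto (fun N => ∑' j, thetaTerm q N j) atTop
      (𝓝 ((qPochhammerInf (q ^ 2))⁻¹ * ∑' j : ℤ, (-1) ^ j * q ^ (j ^ 2))) := by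
  have hQ₀ : 0 ≤ q ^ 2 := sq_nonneg q
  have hQ₁ : q ^ 2 < 1 := pow_lt_one₀ hq₀.le hq₁ two_ne_zero
  rw [← tsum_mul_left]
  refine tendsto_tsum_of_dominated_convergence
    (bound := fun j => (qPochhammerInf (q ^ 2) ^ 2)⁻¹ * q ^ (j ^ 2))
    ((summable_zpow_sq hq₀.le hq₁).mul_left _) (fun j => ?_) (.of_forall fun N j => ?_)
  · exact ((tendsto_gaussianBinomial_central hQ₀ hQ₁ j).mul_const _).congr fun N => by
      rw [thetaTerm]; ring
  · rw [thetaTerm, norm_mul, norm_mul, Real.norm_eq_abs, abs_neg_one_zpow, one_mul,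
      Real.norm_of_nonneg (gaussianBinomial_nonneg hQ₀ hQ₁ _ _),
      Real.norm_of_nonneg (zpow_pos hq₀ _).le]
    exact mul_le_mul_of_nonneg_right (gaussianBinomial_le hQ₀ hQ₁ _ _) (zpow_pos hq₀ _).le

theorem tsum_neg_one_zpow_mul_zpow_sq_eq_tprod {q : ℝ} (hq₀ : 0 < q) (hq₁ : q < 1) :
    ∑' j : ℤ, (-1) ^ j * q ^ (j ^ 2) =
      ∏' n : ℕ, (1 - q ^ (2 * n + 2)) * (1 - q ^ (2 * n + 1)) ^ 2 := by
  have hQ₀ : 0 ≤ q ^ 2 := sq_nonneg q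
  have hQ₁ : q ^ 2 < 1 := pow_lt_one₀ hq₀.le hq₁ two_ne_zero
  have hQ : ∀ m : ℕ, (q ^ 2) ^ (m + 1) ≠ 1 := fun m => (pow_lt_one₀ hQ₀ hQ₁ m.succ_ne_zero).ne
  obtain ⟨R, hR⟩ : Multipliable fun n : ℕ => 1 - q ^ (2 * n + 1) :=
    (hasProd_one_sub_of_summable (fun n => pow_lt_one₀ hq₀.le hq₁ (by omega))
      (summable_pow_two_mul_add hq₀.le hq₁ 1)).multipliable
  have hfinite : Tendsto (fun N => ∑' j, thetaTerm q N j) atTop (𝓝 (R ^ 2)) := by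
    refine (hR.tendsto_prod_nat.pow 2).congr fun N => ?_
    rw [tsum_eq_finsum (hasFiniteSupport_thetaTerm N), finsum_thetaTerm hq₀.ne' hQ, prod_pow]
  have key := tendsto_nhds_unique (tendsto_tsum_thetaTerm hq₀ hq₁) hfinite
  rw [inv_mul_eq_iff_eq_mul₀ (qPochhammerInf_pos hQ₀ hQ₁).ne'] at key
  rw [key, ((hasProd_qPochhammerInf hQ₀ hQ₁).mul (hR.pow 2)).tprod_eq.symm]
  congr with n
  ring

section LogSeries

theorem summable_inv_sq_of_le {a : ℕ → ℝ} (ha : ∀ n : ℕ, (n : ℝ) + 1 ≤ a n) :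
    Summable fun n => (a n ^ 2)⁻¹ := by
  have h : Summable fun n : ℕ => (((n : ℝ) + 1) ^ 2)⁻¹ := by
    simpa using (summable_nat_add_iff 1).2 (Real.summable_nat_pow_inv.2 one_lt_two)
  exact h.of_nonneg_of_le (fun n => by positivity) fun n =>
    inv_anti₀ (by positivity) (pow_le_pow_left₀ (by positivity) (ha n) 2)

theorem exp_neg_le_two_div_sq {x : ℝ} (hx : 0 < x) : exp (-x) ≤ 2 / x ^ 2 := by
  rw [exp_neg, ← inv_div]
  exact inv_anti₀ (by positivity) (by nlinarith [quadratic_le_exp_of_nonneg hx.le])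

theorem pow_three_div_six_le_exp_sub_one {x : ℝ} (hx : 0 ≤ x) : x ^ 3 / 6 ≤ exp x - 1 := by
  have := sum_le_exp_of_nonneg hx 4
  simp only [sum_range_succ, sum_range_zero, Nat.factorial] at this
  norm_num at this
  nlinarith [sq_nonneg x]

theorem div_exp_mul_sub_one_le {a s t : ℝ} (ha : 0 < a) (hs : 0 < s) (hst : s ≤ t) :
    a / (exp (a * t) - 1) ≤ 6 / s ^ 3 * (a ^ 2)⁻¹ := by
  have hcube := pow_three_div_six_le_exp_sub_one (mul_pos ha hs).le
  have hmono : exp (a * s) ≤ exp (a * t) := exp_le_exp.2 (by gcongr)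
  calc a / (exp (a * t) - 1) ≤ a / ((a * s) ^ 3 / 6) :=
        div_le_div_of_nonneg_left ha.le (by positivity) (by linarith)
    _ = 6 / s ^ 3 * (a ^ 2)⁻¹ := by field_simp

theorem exp_mul_sub_one_pos {a t : ℝ} (ha : 0 < a) (ht : 0 < t) : 0 < exp (a * t) - 1 :=
  sub_pos.2 (one_lt_exp_iff.2 (mul_pos ha ht))

theorem hasDerivAt_log_one_sub_exp_neg_mul {a t : ℝ} (ha : 0 < a) (ht : 0 < t) :
    HasDerivAt (fun s => log (1 - exp (-(a * s)))) (a / (exp (a * t) - 1)) t := by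
  have hlt : exp (-(a * t)) < 1 := exp_lt_one_iff.2 (by nlinarith)
  have h := ((((hasDerivAt_id' t).const_mul a).fun_neg.exp).const_sub 1).log (by linarith)
  convert h using 1
  have h1 := exp_mul_sub_one_pos ha ht
  rw [exp_neg]
  field_simp

variable {a : ℕ → ℝ}

theorem summable_exp_neg_mul (ha : ∀ n, 0 < a n) (hsum : Summable fun n => (a n ^ 2)⁻¹) {t : ℝ}
    (ht : 0 < t) : Summable fun n => exp (-(a n * t)) :=
  (hsum.mul_left (2 / t ^ 2)).of_nonneg_of_le (fun n => (exp_pos _).le) fun n =>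
    (exp_neg_le_two_div_sq (mul_pos (ha n) ht)).trans_eq (by field_simp)

theorem summable_div_exp_mul_sub_one (ha : ∀ n, 0 < a n) (hsum : Summable fun n => (a n ^ 2)⁻¹)
    {t : ℝ} (ht : 0 < t) : Summable fun n => a n / (exp (a n * t) - 1) :=
  (hsum.mul_left (6 / t ^ 3)).of_nonneg_of_le
    (fun n => div_nonneg (ha n).le (exp_mul_sub_one_pos (ha n) ht).le)
    fun n => div_exp_mul_sub_one_le (ha n) ht le_rfl

theorem hasDerivAt_tsum_log_one_sub_exp_neg_mul (ha : ∀ n, 0 < a n)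
    (hsum : Summable fun n => (a n ^ 2)⁻¹) {y : ℝ} (hy : 0 < y) :
    HasDerivAt (fun t => ∑' n, log (1 - exp (-(a n * t)))) (∑' n, a n / (exp (a n * y) - 1)) y := by
  have hy₂ : y ∈ Set.Ioi (y / 2) := by simp; linarith
  refine hasDerivAt_tsum_of_isPreconnected (hsum.mul_left (6 / (y / 2) ^ 3)) isOpen_Ioi
    isPreconnected_Ioi (fun n t ht => hasDerivAt_log_one_sub_exp_neg_mul (ha n) ?_)
    (fun n t ht => ?_) hy₂ ?_ hy₂
  · exact (half_pos hy).trans ht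
  · have ht₀ : 0 < t := (half_pos hy).trans ht
    rw [Real.norm_of_nonneg (div_nonneg (ha n).le (exp_mul_sub_one_pos (ha n) ht₀).le)]
    exact div_exp_mul_sub_one_le (ha n) (half_pos hy) (le_of_lt ht)
  · exact summable_log_one_sub_of_summable (summable_exp_neg_mul ha hsum hy)

end LogSeries

theorem theta4_eq_tsum_zpow (t : ℝ) :
    theta4 t = ∑' j : ℤ, (-1) ^ j * exp (-(π * t)) ^ (j ^ 2) := by
  refine tsum_congr fun j => ?_
  rw [← Int.natAbs_sq, ← Nat.cast_pow, zpow_natCast, ← exp_nat_mul]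
  push_cast [Nat.cast_natAbs, sq_abs]
  ring_nf

theorem theta4_eq_exp {t : ℝ} (ht : 0 < t) :
    theta4 t = exp (∑' n : ℕ, log (1 - exp (-(2 * (n + 1) * π * t))) +
      2 * ∑' n : ℕ, log (1 - exp (-((2 * (n + 1) - 1) * π * t)))) := by
  set q := exp (-(π * t))
  have hq₀ : 0 < q := exp_pos _
  have hq₁ : q < 1 := exp_lt_one_iff.2 (by nlinarith [pi_pos])
  have heven_exp : ∀ n : ℕ, exp (-(2 * (n + 1) * π * t)) = q ^ (2 * n + 2) := fun n => by
    rw [← exp_nat_mul]; push_cast; ring_nf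
  have hodd_exp : ∀ n : ℕ, exp (-((2 * (n + 1) - 1) * π * t)) = q ^ (2 * n + 1) := fun n => by
    rw [← exp_nat_mul]; push_cast; ring_nf
  have hodd := hasProd_one_sub_of_summable (fun n => pow_lt_one₀ hq₀.le hq₁ (by omega))
    (summable_pow_two_mul_add hq₀.le hq₁ 1)
  have heven := hasProd_one_sub_of_summable (fun n => pow_lt_one₀ hq₀.le hq₁ (by omega))
    (summable_pow_two_mul_add hq₀.le hq₁ 2)
  rw [theta4_eq_tsum_zpow, tsum_neg_one_zpow_mul_zpow_sq_eq_tprod hq₀ hq₁,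
    (heven.mul (hodd.pow 2)).tprod_eq, two_mul, exp_add, exp_add, sq]
  simp only [heven_exp, hodd_exp]

theorem theta4_log_deriv_series (y : ℝ) (hy : 0 < y) :
    y ^ 2 * deriv theta4 y / theta4 y =
      2 * y ^ 2 * ∑' n : ℕ,
        ((n + 1) * Real.pi / (Real.exp (2 * (n + 1) * Real.pi * y) - 1) +
          (2 * (n + 1) - 1) * Real.pi /
            (Real.exp ((2 * (n + 1) - 1) * Real.pi * y) - 1)) := by
  have ha : ∀ n : ℕ, (n : ℝ) + 1 ≤ 2 * (n + 1) * π := fun n => by nlinarith [pi_gt_three]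
  have hb : ∀ n : ℕ, (n : ℝ) + 1 ≤ (2 * (n + 1) - 1) * π := fun n => by nlinarith [pi_gt_three]
  have ha₀ : ∀ n : ℕ, 0 < 2 * ((n : ℝ) + 1) * π := fun n => by positivity
  have hb₀ : ∀ n : ℕ, 0 < (2 * ((n : ℝ) + 1) - 1) * π := fun n => by linarith [hb n]
  have hA := hasDerivAt_tsum_log_one_sub_exp_neg_mul ha₀ (summable_inv_sq_of_le ha) hy
  have hB := hasDerivAt_tsum_log_one_sub_exp_neg_mul hb₀ (summable_inv_sq_of_le hb) hy
  have hθ := ((hA.fun_add (hB.const_mul 2)).exp).congr_of_eventuallyEq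
    (eventually_gt_nhds hy |>.mono fun t ht => theta4_eq_exp ht)
  rw [← theta4_eq_exp hy] at hθ
  have hθ₀ : theta4 y ≠ 0 := by rw [theta4_eq_exp hy]; exact (exp_pos _).ne'
  have hsa := summable_div_exp_mul_sub_one ha₀ (summable_inv_sq_of_le ha) hy
  have hsb := summable_div_exp_mul_sub_one hb₀ (summable_inv_sq_of_le hb) hy
  have hhalf : ∑' n : ℕ, ((n : ℝ) + 1) * π / (exp (2 * (n + 1) * π * y) - 1) =
      (∑' n : ℕ, 2 * ((n : ℝ) + 1) * π / (exp (2 * (n + 1) * π * y) - 1)) / 2 := by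
    rw [← tsum_div_const]
    exact tsum_congr fun n => by ring
  rw [hθ.deriv, mul_div_assoc, mul_div_cancel_left₀ _ hθ₀, Summable.tsum_add ?_ hsb, hhalf]
  · ring
  · exact (hsa.div_const 2).congr fun n => by ring
end

section
/- For every y ≥ 1 and every ν ∈ {0, 1, 2, 3}, one has 0 < 2 π^ν e^{−πy/4}/4^ν + 2 · 9^ν π^ν e^{−9πy/4}/4^ν < (−1)^ν ϑ₂^{(ν)}(y), where ϑ₂^{(ν)} denotes the ν-th derivative of ϑ₂. -/
/-
Differentiating the series termwise (legitimate on every half-line `y > a > 0`, where the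
differentiated series is dominated by its value at `a`) gives
`(-1)^ν ϑ₂^{(ν)}(y) = ∑_{n ∈ ℤ} (π (n + 1/2)²)^ν e^{-π y (n + 1/2)²}`,
a series of positive terms.
The terms `n = -1, 0` each equal `π^ν e^{-πy/4} / 4^ν`, the terms `n = -2, 1` each equal
`9^ν π^ν e^{-9πy/4} / 4^ν`, and the term `n = 2` is strictly positive.
-/

/-- The Jacobi theta function ϑ₂, defined for real `y` by
`ϑ₂(y) = ∑_{n ∈ ℤ} e^{−π y (n + 1/2)²}`. -/
noncomputable def theta2 (y : ℝ) : ℝ :=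
  ∑' n : ℤ, Real.exp (-Real.pi * y * ((n : ℝ) + 1/2) ^ 2)

open Real Topology

lemma pow_mul_exp_neg_mul_le (k : ℕ) {a x : ℝ} (ha : 0 < a) (hx : 0 ≤ x) :
    x ^ k * exp (-a * x) ≤ k.factorial * (2 / a) ^ k * exp (-(a / 2) * x) := by
  have h := pow_div_factorial_le_exp (x := a * x / 2) (by positivity) k
  rw [div_le_iff₀ (by positivity)] at h
  calc x ^ k * exp (-a * x) = (2 / a) ^ k * (a * x / 2) ^ k * exp (-a * x) := by
        rw [← mul_pow]; field_simp
    _ ≤ (2 / a) ^ k * (exp (a * x / 2) * k.factorial) * exp (-a * x) := by gcongr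
    _ = k.factorial * (2 / a) ^ k * (exp (a * x / 2) * exp (-a * x)) := by ring
    _ = k.factorial * (2 / a) ^ k * exp (-(a / 2) * x) := by rw [← exp_add]; ring_nf

lemma summable_exp_neg_mul_add_half_sq {b : ℝ} (hb : 0 < b) :
    Summable fun n : ℤ => exp (-b * ((n : ℝ) + 1/2) ^ 2) := by
  have h : Summable fun n : ℕ => exp (-b * ((n : ℝ) + 1/2) ^ 2) :=
    summable_exp_nat_mul_of_ge (neg_lt_zero.2 hb) fun i => by nlinarith
  refine .of_nat_of_neg_add_one (by simpa using h) ?_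
  convert h using 4 with n
  push_cast; ring

lemma Summable.sum_lt_tsum {ι α : Type*} [AddCommMonoid α] [PartialOrder α]
    [IsOrderedCancelAddMonoid α] [TopologicalSpace α] [OrderClosedTopology α] {f : ι → α}
    (hf : Summable f) {s : Finset ι} (hs : ∀ j ∉ s, 0 ≤ f j) {i : ι} (hi : i ∉ s)
    (hpos : 0 < f i) :
    ∑ j ∈ s, f j < ∑' j, f j := by
  classical
  calc ∑ j ∈ s, f j < ∑ j ∈ insert i s, f j := by
        rw [Finset.sum_insert hi]; exact lt_add_of_pos_left _ hpos
    _ ≤ ∑' j, f j :=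
        hf.sum_le_tsum _ fun j hj => hs j fun hjs => hj (Finset.mem_insert_of_mem hjs)

noncomputable def theta2Term (k : ℕ) (y : ℝ) (n : ℤ) : ℝ :=
  (π * ((n : ℝ) + 1/2) ^ 2) ^ k * exp (-π * y * ((n : ℝ) + 1/2) ^ 2)

lemma theta2Term_pos (k : ℕ) (y : ℝ) (n : ℤ) : 0 < theta2Term k y n := by
  have hn : (n : ℝ) + 1/2 ≠ 0 := by
    intro h
    have : 2 * n + 1 = 0 := by exact_mod_cast (by linarith : 2 * (n : ℝ) + 1 = 0)
    omega
  unfold theta2Term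
  positivity

lemma summable_theta2Term (k : ℕ) {y : ℝ} (hy : 0 < y) : Summable (theta2Term k y) := by
  refine .of_nonneg_of_le (fun n => (theta2Term_pos k y n).le) (fun n => ?_)
    ((summable_exp_neg_mul_add_half_sq (b := y / 2 * π) (by positivity)).mul_left
      (k.factorial * (2 / y) ^ k))
  have h := pow_mul_exp_neg_mul_le k hy (x := π * ((n : ℝ) + 1/2) ^ 2) (by positivity)
  simp only [theta2Term]
  convert h using 3 <;> ring

lemma theta2Term_antitone (k : ℕ) (n : ℤ) : Antitone fun y => theta2Term k y n := by
  intro y z hyz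
  have hc : 0 ≤ π * ((n : ℝ) + 1/2) ^ 2 := by positivity
  refine mul_le_mul_of_nonneg_left (exp_le_exp.2 ?_) (by positivity)
  nlinarith

lemma hasDerivAt_theta2Term (k : ℕ) (n : ℤ) (y : ℝ) :
    HasDerivAt (fun z => theta2Term k z n) (-theta2Term (k + 1) y n) y := by
  have h : HasDerivAt (fun z : ℝ => -π * z * ((n : ℝ) + 1/2) ^ 2)
      (-π * ((n : ℝ) + 1/2) ^ 2) y := by
    simpa using ((hasDerivAt_id y).const_mul (-π)).mul_const (((n : ℝ) + 1/2) ^ 2)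
  exact (h.exp.const_mul ((π * ((n : ℝ) + 1/2) ^ 2) ^ k)).congr_deriv
    (by simp only [theta2Term]; ring)

lemma hasDerivAt_tsum_theta2Term (k : ℕ) {y : ℝ} (hy : 0 < y) :
    HasDerivAt (fun z => ∑' n, theta2Term k z n) (-∑' n, theta2Term (k + 1) y n) y := by
  rw [← tsum_neg]
  refine hasDerivAt_tsum_of_isPreconnected (summable_theta2Term (k + 1) (half_pos hy)) isOpen_Ioi
    isPreconnected_Ioi (fun n z _ => hasDerivAt_theta2Term k n z) (fun n z hz => ?_)
    (half_lt_self hy) (summable_theta2Term k hy) (half_lt_self hy)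
  rw [norm_neg, norm_of_nonneg (theta2Term_pos _ _ _).le]
  exact theta2Term_antitone (k + 1) n (le_of_lt hz)

lemma iteratedDeriv_theta2 (k : ℕ) {y : ℝ} (hy : 0 < y) :
    iteratedDeriv k theta2 y = (-1) ^ k * ∑' n, theta2Term k y n := by
  induction k generalizing y with
  | zero => simp [theta2, theta2Term]
  | succ k ih =>
    have heq : iteratedDeriv k theta2 =ᶠ[𝓝 y] fun z => (-1) ^ k * ∑' n, theta2Term k z n :=
      Filter.eventuallyEq_of_mem (isOpen_Ioi.mem_nhds hy) fun z hz => ih hz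
    rw [iteratedDeriv_succ, heq.deriv_eq, ((hasDerivAt_tsum_theta2Term k hy).const_mul _).deriv]
    ring

lemma theta2Term_neg_sub_one (k : ℕ) (y : ℝ) (n : ℤ) :
    theta2Term k y (-n - 1) = theta2Term k y n := by
  unfold theta2Term; push_cast; ring_nf

lemma theta2Term_zero (k : ℕ) (y : ℝ) :
    theta2Term k y 0 = π ^ k * exp (-π * y / 4) / 4 ^ k := by
  rw [theta2Term, show ((0 : ℤ) + 1/2 : ℝ) ^ 2 = 1 / 4 by norm_num, mul_one_div, div_pow]
  ring_nf

lemma theta2Term_one (k : ℕ) (y : ℝ) :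
    theta2Term k y 1 = 9 ^ k * π ^ k * exp (-9 * π * y / 4) / 4 ^ k := by
  rw [theta2Term, show ((1 : ℤ) + 1/2 : ℝ) ^ 2 = 9 / 4 by norm_num, ← mul_div_assoc, div_pow,
    mul_pow]
  ring_nf

theorem theta2_iteratedDeriv_lower_bound_general (y : ℝ) (hy : 1 ≤ y)
    (ν : ℕ) :
    0 < 2 * Real.pi ^ ν * Real.exp (-Real.pi * y / 4) / 4 ^ ν +
        2 * 9 ^ ν * Real.pi ^ ν * Real.exp (-9 * Real.pi * y / 4) / 4 ^ ν ∧
      2 * Real.pi ^ ν * Real.exp (-Real.pi * y / 4) / 4 ^ ν +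
          2 * 9 ^ ν * Real.pi ^ ν * Real.exp (-9 * Real.pi * y / 4) / 4 ^ ν <
        (-1 : ℝ) ^ ν * iteratedDeriv ν theta2 y := by
  have hy0 : 0 < y := by linarith
  refine ⟨by positivity, ?_⟩
  rw [iteratedDeriv_theta2 ν hy0, ← mul_assoc, ← pow_add, Even.neg_one_pow ⟨ν, rfl⟩,
    one_mul]
  refine lt_of_eq_of_lt ?_ ((summable_theta2Term ν hy0).sum_lt_tsum (s := {-2, -1, 0, 1})
    (fun n _ => (theta2Term_pos ν y n).le) (by decide) (theta2Term_pos ν y 2))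
  have h₀ : theta2Term ν y (-1) = theta2Term ν y 0 := theta2Term_neg_sub_one ν y 0
  have h₁ : theta2Term ν y (-2) = theta2Term ν y 1 := theta2Term_neg_sub_one ν y 1
  rw [Finset.sum_insert (by decide), Finset.sum_insert (by decide), Finset.sum_insert (by decide),
    Finset.sum_singleton, h₀, h₁, theta2Term_zero, theta2Term_one]
  ring

theorem theta2_iteratedDeriv_lower_bound (y : ℝ) (hy : 1 ≤ y)
    (ν : ℕ) (hν : ν ∈ ({0, 1, 2, 3} : Set ℕ)) :
    0 < 2 * Real.pi ^ ν * Real.exp (-Real.pi * y / 4) / 4 ^ ν +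
        2 * 9 ^ ν * Real.pi ^ ν * Real.exp (-9 * Real.pi * y / 4) / 4 ^ ν ∧
      2 * Real.pi ^ ν * Real.exp (-Real.pi * y / 4) / 4 ^ ν +
          2 * 9 ^ ν * Real.pi ^ ν * Real.exp (-9 * Real.pi * y / 4) / 4 ^ ν <
        (-1 : ℝ) ^ ν * iteratedDeriv ν theta2 y :=
  theta2_iteratedDeriv_lower_bound_general y hy ν
end

section
/- For every y ≥ 1, one has −ϑ₂'(y) < 2 π e^{−πy/4}/4 + 2 · (1 + 0.00003) · 9 π e^{−9πy/4}/4, where ϑ₂' denotes the first derivative of ϑ₂. -/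
open Real

/-- Geometric bound for the weighted terms over ℕ. -/
lemma theta2_aux_bound (b : ℝ) (hb : 1/2 ≤ b) (n : ℕ) :
    Real.pi * ((n : ℝ) + 1/2) ^ 2 * Real.exp (-Real.pi * b * ((n : ℝ) + 1/2) ^ 2)
      ≤ Real.pi * Real.exp (2 - Real.pi) ^ n := by
  have hn : (0:ℝ) ≤ (n : ℝ) := n.cast_nonneg
  have hexp := Real.add_one_le_exp (n : ℝ)
  have hEpos := Real.exp_pos (n : ℝ)
  have h1 : ((n : ℝ) + 1/2) ^ 2 ≤ Real.exp (n : ℝ) ^ 2 := by nlinarith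
  have h2 : Real.exp (-Real.pi * b * ((n : ℝ) + 1/2) ^ 2) ≤ Real.exp (-Real.pi * (n : ℝ)) := by
    apply Real.exp_le_exp.2
    have hc : 2 * (n:ℝ) ≤ ((n : ℝ) + 1/2) ^ 2 := by nlinarith [sq_nonneg ((n:ℝ) - 1/2)]
    nlinarith [mul_nonneg (mul_nonneg Real.pi_pos.le hn) (by linarith : (0:ℝ) ≤ 2*b - 1),
      mul_le_mul_of_nonneg_left hc (mul_nonneg Real.pi_pos.le (by linarith : (0:ℝ) ≤ b))]
  have heq : Real.exp (n : ℝ) ^ 2 * Real.exp (-Real.pi * (n : ℝ))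
      = Real.exp (2 - Real.pi) ^ n := by
    rw [← Real.exp_nat_mul, ← Real.exp_nat_mul, ← Real.exp_add]
    congr 1; push_cast; ring
  calc Real.pi * ((n : ℝ) + 1/2) ^ 2 * Real.exp (-Real.pi * b * ((n : ℝ) + 1/2) ^ 2)
      = Real.pi * (((n : ℝ) + 1/2) ^ 2 * Real.exp (-Real.pi * b * ((n : ℝ) + 1/2) ^ 2)) := by
        ring
    _ ≤ Real.pi * (Real.exp (n : ℝ) ^ 2 * Real.exp (-Real.pi * (n : ℝ))) := by
        have e1 := (Real.exp_pos (-Real.pi * b * ((n : ℝ) + 1/2) ^ 2)).le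
        exact mul_le_mul_of_nonneg_left
          (mul_le_mul h1 h2 e1 (sq_nonneg _)) Real.pi_pos.le
    _ = Real.pi * Real.exp (2 - Real.pi) ^ n := by rw [heq]

lemma theta2_geo_summable : Summable (fun n : ℕ => Real.pi * Real.exp (2 - Real.pi) ^ n) := by
  apply Summable.mul_left
  exact summable_geometric_of_lt_one (Real.exp_nonneg _)
    (Real.exp_lt_one_iff.2 (by nlinarith [Real.pi_gt_three]))

lemma theta2_nat_summable (b : ℝ) (hb : 1/2 ≤ b) :
    Summable (fun n : ℕ =>
      Real.pi * ((n : ℝ) + 1/2) ^ 2 * Real.exp (-Real.pi * b * ((n : ℝ) + 1/2) ^ 2)) := by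
  apply Summable.of_nonneg_of_le _ (theta2_aux_bound b hb) theta2_geo_summable
  intro n
  positivity

lemma theta2_int_summable (b : ℝ) (hb : 1/2 ≤ b) :
    Summable (fun n : ℤ =>
      Real.pi * ((n : ℝ) + 1/2) ^ 2 * Real.exp (-Real.pi * b * ((n : ℝ) + 1/2) ^ 2)) := by
  apply Summable.of_nat_of_neg_add_one
  · exact_mod_cast theta2_nat_summable b hb
  · have : (fun n : ℕ => Real.pi * (((-(n:ℤ) - 1 : ℤ) : ℝ) + 1/2) ^ 2 *
        Real.exp (-Real.pi * b * (((-(n:ℤ) - 1 : ℤ) : ℝ) + 1/2) ^ 2))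
        = fun n : ℕ => Real.pi * ((n : ℝ) + 1/2) ^ 2 *
          Real.exp (-Real.pi * b * ((n : ℝ) + 1/2) ^ 2) := by
      funext n
      have : (((-(n:ℤ) - 1 : ℤ) : ℝ) + 1/2) ^ 2 = ((n : ℝ) + 1/2) ^ 2 := by push_cast; ring
      rw [this]
    have h2 : ∀ n : ℕ, (-((n:ℤ) + 1)) = (-(n:ℤ) - 1 : ℤ) := by intro n; ring
    simp only [h2]
    rw [this]
    exact theta2_nat_summable b hb

lemma theta2_exp_nat_summable (b : ℝ) (hb : 1/2 ≤ b) :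
    Summable (fun n : ℕ => Real.exp (-Real.pi * b * ((n : ℝ) + 1/2) ^ 2)) := by
  refine Summable.of_nonneg_of_le (fun n => (Real.exp_pos _).le) (fun n => ?_)
    (summable_geometric_of_lt_one (Real.exp_nonneg (2 - Real.pi))
      (Real.exp_lt_one_iff.2 (by nlinarith [Real.pi_gt_three])))
  rw [← Real.exp_nat_mul]
  apply Real.exp_le_exp.2
  have hn : (0:ℝ) ≤ (n : ℝ) := n.cast_nonneg
  have hc : 2 * (n:ℝ) ≤ ((n : ℝ) + 1/2) ^ 2 := by nlinarith [sq_nonneg ((n:ℝ) - 1/2)]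
  have hpib : Real.pi * (n:ℝ) ≤ Real.pi * b * ((n : ℝ) + 1/2) ^ 2 := by
    nlinarith [mul_nonneg (mul_nonneg Real.pi_pos.le hn) (by linarith : (0:ℝ) ≤ 2*b - 1),
      mul_le_mul_of_nonneg_left hc (mul_nonneg Real.pi_pos.le (by linarith : (0:ℝ) ≤ b))]
  nlinarith [Real.pi_gt_three, hn]

lemma theta2_exp_int_summable (b : ℝ) (hb : 1/2 ≤ b) :
    Summable (fun n : ℤ => Real.exp (-Real.pi * b * ((n : ℝ) + 1/2) ^ 2)) := by
  apply Summable.of_nat_of_neg_add_one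
  · exact_mod_cast theta2_exp_nat_summable b hb
  · have : (fun n : ℕ => Real.exp (-Real.pi * b * (((-((n:ℤ) + 1) : ℤ) : ℝ) + 1/2) ^ 2))
        = fun n : ℕ => Real.exp (-Real.pi * b * ((n : ℝ) + 1/2) ^ 2) := by
      funext n
      have : (((-((n:ℤ) + 1) : ℤ) : ℝ) + 1/2) ^ 2 = ((n : ℝ) + 1/2) ^ 2 := by push_cast; ring
      rw [this]
    rw [this]
    exact theta2_exp_nat_summable b hb

set_option maxHeartbeats 1000000 in
lemma theta2_hasDerivAt (y : ℝ) (hy : 1 ≤ y) :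
    HasDerivAt theta2
      (∑' n : ℤ, (-Real.pi * ((n : ℝ) + 1/2) ^ 2) *
        Real.exp (-Real.pi * y * ((n : ℝ) + 1/2) ^ 2)) y := by
  have key : ∀ (c t : ℝ), HasDerivAt (fun t => Real.exp (-Real.pi * t * c))
      ((-Real.pi * c) * Real.exp (-Real.pi * t * c)) t := by
    intro c t
    have h1 : HasDerivAt (fun t : ℝ => -Real.pi * t * c) (-Real.pi * c) t := by
      simpa using ((hasDerivAt_id t).const_mul (-Real.pi)).mul_const c
    simpa [mul_comm] using h1.exp
  have := hasDerivAt_tsum_of_isPreconnected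
    (u := fun n : ℤ => Real.pi * ((n : ℝ) + 1/2) ^ 2 *
      Real.exp (-Real.pi * (1/2) * ((n : ℝ) + 1/2) ^ 2))
    (g := fun (n : ℤ) (t : ℝ) => Real.exp (-Real.pi * t * ((n : ℝ) + 1/2) ^ 2))
    (g' := fun (n : ℤ) (t : ℝ) => (-Real.pi * ((n : ℝ) + 1/2) ^ 2) *
      Real.exp (-Real.pi * t * ((n : ℝ) + 1/2) ^ 2))
    (theta2_int_summable (1/2) le_rfl) (isOpen_Ioi (a := (1/2 : ℝ))) isPreconnected_Ioi
    (fun n t _ => key _ t) ?_ (show y ∈ Set.Ioi (1/2 : ℝ) by simp; linarith)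
    (theta2_exp_int_summable y (by linarith)) (show y ∈ Set.Ioi (1/2 : ℝ) by simp; linarith)
  · exact this
  · intro n x hx
    have hx' : (1/2 : ℝ) < x := hx
    have hc : (0:ℝ) ≤ ((n : ℝ) + 1/2) ^ 2 := sq_nonneg _
    have hnorm : ‖(-Real.pi * ((n : ℝ) + 1/2) ^ 2) *
        Real.exp (-Real.pi * x * ((n : ℝ) + 1/2) ^ 2)‖
        = Real.pi * ((n : ℝ) + 1/2) ^ 2 * Real.exp (-Real.pi * x * ((n : ℝ) + 1/2) ^ 2) := by
      rw [norm_mul, Real.norm_eq_abs, Real.norm_eq_abs, neg_mul, abs_neg, abs_mul,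
        abs_of_nonneg Real.pi_pos.le, abs_of_nonneg hc, Real.abs_exp]
    rw [hnorm]
    have : Real.exp (-Real.pi * x * ((n : ℝ) + 1/2) ^ 2)
        ≤ Real.exp (-Real.pi * (1/2) * ((n : ℝ) + 1/2) ^ 2) := by
      apply Real.exp_le_exp.2
      nlinarith [mul_le_mul_of_nonneg_right hx'.le (mul_nonneg Real.pi_pos.le hc)]
    show Real.pi * ((n : ℝ) + 1/2) ^ 2 * Real.exp (-Real.pi * x * ((n : ℝ) + 1/2) ^ 2)
      ≤ Real.pi * ((n : ℝ) + 1/2) ^ 2 * Real.exp (-Real.pi * (1/2) * ((n : ℝ) + 1/2) ^ 2)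
    exact mul_le_mul_of_nonneg_left this (by positivity)

set_option maxHeartbeats 1000000 in
theorem theta2_deriv_upper_bound (y : ℝ) (hy : 1 ≤ y) :
    -deriv theta2 y < 2 * Real.pi * Real.exp (-Real.pi * y / 4) / 4 +
      2 * (1 + 0.00003) * 9 * Real.pi * Real.exp (-9 * Real.pi * y / 4) / 4 := by
  have hb : (1/2 : ℝ) ≤ y := by linarith
  -- the value of the derivative
  have hderiv : deriv theta2 y = ∑' n : ℤ, (-Real.pi * ((n : ℝ) + 1/2) ^ 2) *
      Real.exp (-Real.pi * y * ((n : ℝ) + 1/2) ^ 2) := (theta2_hasDerivAt y hy).deriv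
  have hsumZ := theta2_int_summable y hb
  have hsumN := theta2_nat_summable y hb
  have hneg : -deriv theta2 y = ∑' n : ℤ, Real.pi * ((n : ℝ) + 1/2) ^ 2 *
      Real.exp (-Real.pi * y * ((n : ℝ) + 1/2) ^ 2) := by
    rw [hderiv, ← tsum_neg]
    congr 1; funext n; ring
  -- split the ℤ-sum into two ℕ-sums
  have hnegfun : (fun n : ℕ => Real.pi * (((-((n:ℤ) + 1) : ℤ) : ℝ) + 1/2) ^ 2 *
      Real.exp (-Real.pi * y * (((-((n:ℤ) + 1) : ℤ) : ℝ) + 1/2) ^ 2))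
      = fun n : ℕ => Real.pi * ((n : ℝ) + 1/2) ^ 2 *
        Real.exp (-Real.pi * y * ((n : ℝ) + 1/2) ^ 2) := by
    funext n
    have : (((-((n:ℤ) + 1) : ℤ) : ℝ) + 1/2) ^ 2 = ((n : ℝ) + 1/2) ^ 2 := by push_cast; ring
    rw [this]
  have hsplit : (∑' n : ℤ, Real.pi * ((n : ℝ) + 1/2) ^ 2 *
      Real.exp (-Real.pi * y * ((n : ℝ) + 1/2) ^ 2))
      = 2 * ∑' n : ℕ, Real.pi * ((n : ℝ) + 1/2) ^ 2 *
        Real.exp (-Real.pi * y * ((n : ℝ) + 1/2) ^ 2) := by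
    rw [tsum_of_nat_of_neg_add_one (by exact_mod_cast hsumN) (by rw [hnegfun]; exact hsumN)]
    rw [hnegfun]
    push_cast
    ring
  -- split off the first term of the ℕ-sum
  have hzero : (∑' n : ℕ, Real.pi * ((n : ℝ) + 1/2) ^ 2 *
      Real.exp (-Real.pi * y * ((n : ℝ) + 1/2) ^ 2))
      = Real.pi / 4 * Real.exp (-Real.pi * y / 4)
        + ∑' n : ℕ, Real.pi * (((n:ℝ) + 1) + 1/2) ^ 2 *
          Real.exp (-Real.pi * y * (((n:ℝ) + 1) + 1/2) ^ 2) := by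
    rw [Summable.tsum_eq_zero_add hsumN]
    congr 1
    · rw [show -Real.pi * y * (((0:ℕ):ℝ) + 1/2) ^ 2 = -Real.pi * y / 4 by push_cast; ring]
      push_cast; ring
    · exact tsum_congr fun n => by push_cast; ring_nf
  -- the tail bound
  set q : ℝ := Real.exp (2 - 4 * Real.pi) with hq_def
  have hq0 : 0 ≤ q := (Real.exp_pos _).le
  have hq_small : q < 2.9e-5 := by
    have h1 : q < Real.exp (-(21/2)) := by
      apply Real.exp_lt_exp.2
      nlinarith [Real.pi_gt_d6]
    have hE : Real.exp (21/2) > 36122 := by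
      have e10 : Real.exp (10 : ℝ) = Real.exp 1 ^ 10 := by
        rw [← Real.exp_nat_mul]; norm_num
      have e1 : Real.exp 1 > 2.7182818283 := Real.exp_one_gt_d9
      have h10 : (2.7182818283:ℝ) ^ 10 < Real.exp 1 ^ 10 :=
        pow_lt_pow_left₀ e1 (by norm_num) (by norm_num)
      have hA : (22026:ℝ) < (2.7182818283:ℝ) ^ 10 := by norm_num
      have hhalf : Real.exp (1/2 : ℝ) > 1.64 := by
        have hsq : Real.exp (1/2 : ℝ) ^ 2 = Real.exp 1 := by
          rw [sq, ← Real.exp_add]; norm_num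
        nlinarith [Real.exp_pos (1/2 : ℝ)]
      have : Real.exp (21/2 : ℝ) = Real.exp (10 : ℝ) * Real.exp (1/2 : ℝ) := by
        rw [← Real.exp_add]; norm_num
      rw [this, e10]
      nlinarith [Real.exp_pos (1/2 : ℝ)]
    have hprod : Real.exp (-(21/2 : ℝ)) * Real.exp (21/2 : ℝ) = 1 := by
      rw [← Real.exp_add]; norm_num
    nlinarith [Real.exp_pos (-(21/2 : ℝ))]
  have hq1 : q < 1 := by linarith
  -- per-term tail estimate
  have hterm : ∀ n : ℕ, Real.pi * (((n:ℝ) + 1) + 1/2) ^ 2 *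
      Real.exp (-Real.pi * y * (((n:ℝ) + 1) + 1/2) ^ 2)
      ≤ 9 * Real.pi / 4 * Real.exp (-9 * Real.pi * y / 4) * q ^ n := by
    intro n
    have hn : (0:ℝ) ≤ (n : ℝ) := n.cast_nonneg
    have hn2 : (n : ℝ) ≤ (n : ℝ) ^ 2 := by
      exact_mod_cast Nat.le_self_pow two_ne_zero n
    have hexp := Real.add_one_le_exp (n : ℝ)
    have hEpos := Real.exp_pos (n : ℝ)
    have h1 : (((n:ℝ) + 1) + 1/2) ^ 2 ≤ 9/4 * Real.exp (n : ℝ) ^ 2 := by nlinarith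
    have h2 : Real.exp (-Real.pi * y * (((n:ℝ) + 1) + 1/2) ^ 2)
        = Real.exp (-9 * Real.pi * y / 4) * Real.exp (-Real.pi * y * ((n:ℝ) ^ 2 + 3 * n)) := by
      rw [← Real.exp_add]; congr 1; ring
    have h3 : Real.exp (-Real.pi * y * ((n:ℝ) ^ 2 + 3 * n)) ≤ Real.exp (-4 * Real.pi * n) := by
      apply Real.exp_le_exp.2
      have h4 : 4 * (n:ℝ) ≤ (n:ℝ) ^ 2 + 3 * n := by nlinarith
      nlinarith [Real.pi_pos, mul_le_mul_of_nonneg_left h4 Real.pi_pos.le,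
        mul_le_mul_of_nonneg_right hy (mul_nonneg Real.pi_pos.le (by nlinarith : (0:ℝ) ≤ (n:ℝ)^2 + 3*n))]
    have hqn : Real.exp (n:ℝ) ^ 2 * Real.exp (-4 * Real.pi * n) = q ^ n := by
      rw [hq_def, ← Real.exp_nat_mul, ← Real.exp_nat_mul, ← Real.exp_add]
      congr 1; push_cast; ring
    rw [h2]
    calc Real.pi * (((n:ℝ) + 1) + 1/2) ^ 2 *
        (Real.exp (-9 * Real.pi * y / 4) * Real.exp (-Real.pi * y * ((n:ℝ) ^ 2 + 3 * n)))
        = Real.pi * Real.exp (-9 * Real.pi * y / 4) *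
          ((((n:ℝ) + 1) + 1/2) ^ 2 * Real.exp (-Real.pi * y * ((n:ℝ) ^ 2 + 3 * n))) := by
          ring
      _ ≤ Real.pi * Real.exp (-9 * Real.pi * y / 4) *
          ((9/4 * Real.exp (n:ℝ) ^ 2) * Real.exp (-4 * Real.pi * n)) := by
          refine mul_le_mul_of_nonneg_left ?_ (by positivity)
          exact mul_le_mul h1 h3 (Real.exp_pos _).le (by positivity)
      _ = Real.pi * (9/4 * Real.exp (n:ℝ) ^ 2) *
          (Real.exp (-9 * Real.pi * y / 4) * Real.exp (-4 * Real.pi * n)) := by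
          ring
      _ = 9 * Real.pi / 4 * Real.exp (-9 * Real.pi * y / 4) * q ^ n := by
          rw [← hqn]; ring
  -- summability of the tail and the geometric bound
  have hsumTail : Summable (fun n : ℕ => Real.pi * (((n:ℝ) + 1) + 1/2) ^ 2 *
      Real.exp (-Real.pi * y * (((n:ℝ) + 1) + 1/2) ^ 2)) := by
    have h := (summable_nat_add_iff 1).2 hsumN
    exact h.congr fun n => by push_cast; ring_nf
  have hsumGeo : Summable (fun n : ℕ =>
      9 * Real.pi / 4 * Real.exp (-9 * Real.pi * y / 4) * q ^ n) :=
    (summable_geometric_of_lt_one hq0 hq1).mul_left _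
  have htail : (∑' n : ℕ, Real.pi * (((n:ℝ) + 1) + 1/2) ^ 2 *
      Real.exp (-Real.pi * y * (((n:ℝ) + 1) + 1/2) ^ 2))
      ≤ 9 * Real.pi / 4 * Real.exp (-9 * Real.pi * y / 4) * (1 - q)⁻¹ := by
    calc (∑' n : ℕ, Real.pi * (((n:ℝ) + 1) + 1/2) ^ 2 *
        Real.exp (-Real.pi * y * (((n:ℝ) + 1) + 1/2) ^ 2))
        ≤ ∑' n : ℕ, 9 * Real.pi / 4 * Real.exp (-9 * Real.pi * y / 4) * q ^ n :=
          Summable.tsum_le_tsum hterm hsumTail hsumGeo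
      _ = 9 * Real.pi / 4 * Real.exp (-9 * Real.pi * y / 4) * (1 - q)⁻¹ := by
          rw [tsum_mul_left, tsum_geometric_of_lt_one hq0 hq1]
  -- final numeric assembly
  have hC : (0:ℝ) < 9 * Real.pi / 4 * Real.exp (-9 * Real.pi * y / 4) := by positivity
  have hfrac : (1 - q)⁻¹ < 1 + 0.00003 := by
    rw [inv_lt_iff_one_lt_mul₀ (by linarith)]
    nlinarith
  have htail' : (∑' n : ℕ, Real.pi * (((n:ℝ) + 1) + 1/2) ^ 2 *
      Real.exp (-Real.pi * y * (((n:ℝ) + 1) + 1/2) ^ 2))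
      < (1 + 0.00003) * (9 * Real.pi / 4 * Real.exp (-9 * Real.pi * y / 4)) := by
    calc _ ≤ 9 * Real.pi / 4 * Real.exp (-9 * Real.pi * y / 4) * (1 - q)⁻¹ := htail
      _ < (1 + 0.00003) * (9 * Real.pi / 4 * Real.exp (-9 * Real.pi * y / 4)) := by
          nlinarith
  rw [hneg, hsplit, hzero]
  nlinarith [htail']
end

section
/- For every y ≥ 1, one has ϑ₂''(y) < 2 π² e^{−πy/4}/16 + 2 · (1 + 0.00008) · 81 π² e^{−9πy/4}/16, where ϑ₂'' denotes the second derivative of ϑ₂. -/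
/-!
Differentiating the theta series termwise gives
`ϑ₂''(y) = ∑ₙ cₙ² e^{-cₙ y}` with `cₙ = π (n + 1/2)²`, and the symmetry `n ↦ -n - 1` doubles
the sum over `n ≥ 0`. The terms `n = 0, 1` are the two main terms of the bound. For `y ≥ 1` each
later term is at most `(625/81) e^{-4π} e^{-(n-2)}` times the `n = 1` term, because
`cₙ - c₁ = π (n - 1)(n + 2)` grows quadratically; summing this geometric series and using
`e^{4π} > e^{12} > 160000` bounds the whole tail by `0.00008` times the `n = 1` term.
-/

open Real Set

section ExpSeries

variable {ι : Type*} {c : ι → ℝ}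

theorem hasDerivAt_tsum_pow_mul_exp_neg_mul (hc : ∀ i, 0 ≤ c i)
    (hsum : ∀ k : ℕ, ∀ a > 0, Summable fun i => c i ^ k * exp (-c i * a)) (k : ℕ) {y : ℝ}
    (hy : 0 < y) :
    HasDerivAt (fun z => ∑' i, (-c i) ^ k * exp (-c i * z))
      (∑' i, (-c i) ^ (k + 1) * exp (-c i * y)) y := by
  have hy_mem : y ∈ Ioi (y / 2) := mem_Ioi.mpr (by linarith)
  refine hasDerivAt_tsum_of_isPreconnected (g := fun i z => (-c i) ^ k * exp (-c i * z))
    (g' := fun i z => (-c i) ^ (k + 1) * exp (-c i * z))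
    (hsum (k + 1) (y / 2) (by positivity)) isOpen_Ioi
    isPreconnected_Ioi (fun i z _ => ?_) (fun i z hz => ?_) hy_mem ?_ hy_mem
  · exact (((hasDerivAt_id' z).const_mul (-c i)).exp.const_mul ((-c i) ^ k)).congr_deriv
      (by ring)
  · rw [norm_mul, norm_pow, norm_neg, Real.norm_of_nonneg (hc i),
      Real.norm_of_nonneg (exp_pos _).le]
    have hcz := mul_le_mul_of_nonneg_left (mem_Ioi.mp hz).le (hc i)
    exact mul_le_mul_of_nonneg_left (exp_le_exp.mpr (by linarith)) (pow_nonneg (hc i) _)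
  · refine ((hsum k y hy).mul_left ((-1) ^ k)).congr fun i => ?_
    rw [neg_pow]
    ring

theorem iteratedDeriv_tsum_exp_neg_mul (hc : ∀ i, 0 ≤ c i)
    (hsum : ∀ k : ℕ, ∀ a > 0, Summable fun i => c i ^ k * exp (-c i * a)) (k : ℕ) :
    EqOn (iteratedDeriv k fun y => ∑' i, exp (-c i * y))
      (fun y => ∑' i, (-c i) ^ k * exp (-c i * y)) (Ioi 0) := by
  induction k with
  | zero => intro y _; simp
  | succ k ih =>
    intro y hy
    rw [iteratedDeriv_succ, (ih.eventuallyEq_of_mem (isOpen_Ioi.mem_nhds hy)).deriv_eq]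
    exact (hasDerivAt_tsum_pow_mul_exp_neg_mul hc hsum k hy).deriv

end ExpSeries

noncomputable def theta2Exponent (n : ℤ) : ℝ := π * (n + 1 / 2) ^ 2

lemma theta2_eq_tsum : theta2 = fun y => ∑' n : ℤ, exp (-theta2Exponent n * y) := by
  funext y
  simp only [theta2, theta2Exponent]
  ring_nf

lemma theta2Exponent_nonneg (n : ℤ) : 0 ≤ theta2Exponent n := by
  unfold theta2Exponent; positivity

lemma theta2Exponent_neg_add_one (n : ℤ) : theta2Exponent (-(n + 1)) = theta2Exponent n := by
  simp only [theta2Exponent]; push_cast; ring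

lemma summable_theta2Exponent_pow_mul_exp_nat (k : ℕ) {a : ℝ} (ha : 0 < a) :
    Summable fun n : ℕ => theta2Exponent n ^ k * exp (-theta2Exponent n * a) := by
  have hmajor : Summable fun n : ℕ => π ^ k * exp (π * a) *
      (((n + 1 : ℕ) : ℝ) ^ (2 * k) * exp (-(π * a) * ((n + 1 : ℕ) : ℝ))) :=
    ((summable_nat_add_iff 1).mpr
      (summable_pow_mul_exp_neg_nat_mul (2 * k) (by positivity))).mul_left _
  refine hmajor.of_nonneg_of_le
    (fun n => mul_nonneg (pow_nonneg (theta2Exponent_nonneg n) k) (exp_pos _).le) fun n => ?_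
  have hx : (0 : ℝ) ≤ n := n.cast_nonneg
  have hle : theta2Exponent n ≤ π * ((n : ℝ) + 1) ^ 2 := by
    unfold theta2Exponent; push_cast; gcongr; linarith
  have hge : π * n ≤ theta2Exponent n := by
    unfold theta2Exponent; push_cast; gcongr; nlinarith
  calc theta2Exponent n ^ k * exp (-theta2Exponent n * a)
      ≤ (π * ((n : ℝ) + 1) ^ 2) ^ k * exp (π * a + -(π * a) * ((n : ℝ) + 1)) := by
        refine mul_le_mul (pow_le_pow_left₀ (theta2Exponent_nonneg n) hle k) ?_
          (exp_pos _).le (by positivity)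
        gcongr
        nlinarith
    _ = _ := by rw [exp_add, mul_pow, ← pow_mul]; push_cast; ring

lemma summable_theta2Exponent_pow_mul_exp (k : ℕ) {a : ℝ} (ha : 0 < a) :
    Summable fun n : ℤ => theta2Exponent n ^ k * exp (-theta2Exponent n * a) :=
  .of_nat_of_neg_add_one (summable_theta2Exponent_pow_mul_exp_nat k ha) <| by
    simpa only [theta2Exponent_neg_add_one] using summable_theta2Exponent_pow_mul_exp_nat k ha

lemma iteratedDeriv_two_theta2 {y : ℝ} (hy : 0 < y) :
    iteratedDeriv 2 theta2 y =
      2 * ∑' n : ℕ, theta2Exponent n ^ 2 * exp (-theta2Exponent n * y) := by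
  rw [theta2_eq_tsum, iteratedDeriv_tsum_exp_neg_mul theta2Exponent_nonneg
    (fun k _ ha => summable_theta2Exponent_pow_mul_exp k ha) 2 hy]
  have hnat := summable_theta2Exponent_pow_mul_exp_nat 2 hy
  simp only [neg_sq]
  rw [tsum_of_nat_of_neg_add_one hnat (by simpa only [theta2Exponent_neg_add_one] using hnat)]
  simp only [theta2Exponent_neg_add_one]
  ring

lemma theta2Exponent_add_two_sq_mul_exp_le (n : ℕ) {y : ℝ} (hy : 1 ≤ y) :
    theta2Exponent (n + 2 : ℕ) ^ 2 * exp (-theta2Exponent (n + 2 : ℕ) * y) ≤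
      625 / 81 * exp (-4 * π) * exp (-1) ^ n *
        (theta2Exponent 1 ^ 2 * exp (-theta2Exponent 1 * y)) := by
  have hx : (0 : ℝ) ≤ n := n.cast_nonneg
  have hc : theta2Exponent (n + 2 : ℕ) = π * ((n : ℝ) + 5 / 2) ^ 2 := by
    simp only [theta2Exponent]; push_cast; ring
  have hc₁ : theta2Exponent 1 = 9 * π / 4 := by
    simp only [theta2Exponent]; push_cast; ring
  have hpoly : ((n : ℝ) + 5 / 2) ^ 4 ≤ (5 / 2) ^ 4 * exp (8 / 5 * n) := by
    calc ((n : ℝ) + 5 / 2) ^ 4 = (5 / 2) ^ 4 * (2 / 5 * n + 1) ^ 4 := by ring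
      _ ≤ (5 / 2) ^ 4 * exp (2 / 5 * n) ^ 4 := by gcongr; exact add_one_le_exp _
      _ = (5 / 2) ^ 4 * exp (8 / 5 * n) := by rw [← exp_nat_mul]; ring_nf
  -- `cₙ₊₂ - c₁ = π (n + 1)(n + 4) ≥ 4π + 5πn` absorbs `e^{8n/5}` and leaves `e^{-n}`
  have hexponent : -(π * ((n : ℝ) + 5 / 2) ^ 2) * y ≤
      -(8 / 5 * n) + (-4 * π + n * -1 + -(9 * π / 4) * y) := by
    nlinarith [pi_gt_three, mul_nonneg (by positivity : (0 : ℝ) ≤ π * (n ^ 2 + 5 * n + 4)) (sub_nonneg.mpr hy)]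
  have hexp : exp (8 / 5 * n) * exp (-(8 / 5 * n) + (-4 * π + n * -1 + -(9 * π / 4) * y)) =
      exp (-4 * π) * exp (-1) ^ n * exp (-(9 * π / 4) * y) := by
    rw [← exp_add, ← exp_nat_mul, ← exp_add, ← exp_add]; ring_nf
  calc theta2Exponent (n + 2 : ℕ) ^ 2 * exp (-theta2Exponent (n + 2 : ℕ) * y)
      = π ^ 2 * ((n : ℝ) + 5 / 2) ^ 4 * exp (-(π * ((n : ℝ) + 5 / 2) ^ 2) * y) := by
        rw [hc]; ring
    _ ≤ π ^ 2 * ((5 / 2) ^ 4 * exp (8 / 5 * n)) *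
          exp (-(8 / 5 * n) + (-4 * π + n * -1 + -(9 * π / 4) * y)) := by gcongr
    _ = _ := by rw [hc₁]; linear_combination (625 / 16 * π ^ 2) * hexp

lemma theta2_tail_ratio_lt : 625 / 81 * exp (-4 * π) * (1 - exp (-1))⁻¹ < 0.00008 := by
  have he : 2.7182818283 < exp 1 := exp_one_gt_d9
  have h12 : (160000 : ℝ) < exp 12 := by
    calc (160000 : ℝ) < 2.7182818283 ^ 12 := by norm_num
      _ ≤ exp 1 ^ 12 := by gcongr
      _ = exp 12 := by rw [← exp_nat_mul]; norm_num
  have h4π : exp (-4 * π) < 1 / 160000 := by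
    rw [neg_mul, exp_neg, inv_eq_one_div]
    exact one_div_lt_one_div_of_lt (by norm_num)
      (h12.trans (exp_lt_exp.mpr (by linarith [pi_gt_three])))
  have h1 : 0.632 < 1 - exp (-1) := by
    rw [exp_neg]
    have : (exp 1)⁻¹ < 0.368 := by rw [inv_lt_comm₀ (exp_pos 1) (by norm_num)]; linarith
    linarith
  calc 625 / 81 * exp (-4 * π) * (1 - exp (-1))⁻¹ < 625 / 81 * (1 / 160000) * 0.632⁻¹ := by
        gcongr
    _ < 0.00008 := by norm_num

lemma tsum_theta2Exponent_add_two_sq_mul_exp_lt {y : ℝ} (hy : 1 ≤ y) :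
    ∑' n : ℕ, theta2Exponent (n + 2 : ℕ) ^ 2 * exp (-theta2Exponent (n + 2 : ℕ) * y) <
      0.00008 * (theta2Exponent 1 ^ 2 * exp (-theta2Exponent 1 * y)) := by
  set t₁ := theta2Exponent 1 ^ 2 * exp (-theta2Exponent 1 * y)
  have ht₁ : 0 < t₁ := mul_pos (pow_pos (by simp [theta2Exponent]; positivity) 2) (exp_pos _)
  have hr : exp (-1 : ℝ) < 1 := exp_lt_one_iff.mpr (by norm_num)
  have hgeom : Summable fun n : ℕ => 625 / 81 * exp (-4 * π) * exp (-1) ^ n * t₁ :=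
    ((summable_geometric_of_lt_one (exp_pos _).le hr).mul_left _).mul_right _
  calc ∑' n : ℕ, theta2Exponent (n + 2 : ℕ) ^ 2 * exp (-theta2Exponent (n + 2 : ℕ) * y)
      ≤ ∑' n : ℕ, 625 / 81 * exp (-4 * π) * exp (-1) ^ n * t₁ :=
        ((summable_nat_add_iff 2).mpr (summable_theta2Exponent_pow_mul_exp_nat 2 (by linarith))
          ).tsum_le_tsum (fun n => theta2Exponent_add_two_sq_mul_exp_le n hy) hgeom
    _ = 625 / 81 * exp (-4 * π) * (1 - exp (-1))⁻¹ * t₁ := by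
        rw [tsum_mul_right, tsum_mul_left, tsum_geometric_of_lt_one (exp_pos _).le hr]
    _ < 0.00008 * t₁ := by gcongr; exact theta2_tail_ratio_lt

theorem theta2_second_deriv_upper_bound (y : ℝ) (hy : 1 ≤ y) :
    iteratedDeriv 2 theta2 y < 2 * Real.pi ^ 2 * Real.exp (-Real.pi * y / 4) / 16 +
      2 * (1 + 0.00008) * 81 * Real.pi ^ 2 * Real.exp (-9 * Real.pi * y / 4) / 16 := by
  have hsum := summable_theta2Exponent_pow_mul_exp_nat 2 (by linarith : (0 : ℝ) < y)
  have ht₀ : theta2Exponent 0 ^ 2 * exp (-theta2Exponent 0 * y) =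
      π ^ 2 * exp (-π * y / 4) / 16 := by
    simp only [theta2Exponent]; push_cast; ring_nf
  have ht₁ : theta2Exponent 1 ^ 2 * exp (-theta2Exponent 1 * y) =
      81 * π ^ 2 * exp (-9 * π * y / 4) / 16 := by
    simp only [theta2Exponent]; push_cast; ring_nf
  have htail := tsum_theta2Exponent_add_two_sq_mul_exp_lt hy
  rw [iteratedDeriv_two_theta2 (by linarith), ← hsum.sum_add_tsum_nat_add 2]
  simp only [Finset.sum_range_succ, Finset.sum_range_zero, Nat.cast_zero, Nat.cast_one]
  linarith
end

section
/- For every y ≥ 1, one has −ϑ₂'''(y) < 2 π³ e^{−πy/4}/64 + 2 · (1 + 0.0003) · 729 π³ e^{−9πy/4}/64, where ϑ₂''' denotes the third derivative of ϑ₂. -/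
/-!
Differentiating termwise, `-ϑ₂'''(y) = π³ ∑_{n ∈ ℤ} (n + 1/2)⁶ e^{-πy(n + 1/2)²}`, and by the
symmetry `n ↦ -n - 1` this is twice the sum over `n ≥ 0`. The terms `n = 0, 1` are the two main
terms. For `x ≥ 3/2` passing from `x` to `x + 1` multiplies `x⁶ e^{-πyx²}` by at most
`r = (5/3)⁶ e^{-4πy} ≤ (5/3)⁶ e^{-12} < 1.5 · 10⁻⁴`, so the sum over `n ≥ 1` is at most
`1 / (1 - r) < 1.0003` times its first term.
-/

open Real

section EvenSeries

variable {M : Type*} {f : ℝ → M}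

lemma Function.Even.apply_neg_add_one_add_half (hf : f.Even) (n : ℕ) :
    f (((-(n + 1) : ℤ) : ℝ) + 1 / 2) = f ((n : ℝ) + 1 / 2) := by
  rw [← hf]; push_cast; ring_nf

variable [AddCommMonoid M] [TopologicalSpace M] [ContinuousAdd M]

lemma Function.Even.summable_int_add_half (hf : f.Even)
    (h : Summable fun n : ℕ => f ((n : ℝ) + 1 / 2)) :
    Summable fun n : ℤ => f ((n : ℝ) + 1 / 2) :=
  .of_nat_of_neg_add_one (by simpa using h)
    (by simpa only [hf.apply_neg_add_one_add_half] using h)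

lemma Function.Even.tsum_int_add_half [T2Space M] (hf : f.Even)
    (h : Summable fun n : ℕ => f ((n : ℝ) + 1 / 2)) :
    ∑' n : ℤ, f ((n : ℝ) + 1 / 2) = 2 • ∑' n : ℕ, f ((n : ℝ) + 1 / 2) := by
  rw [tsum_of_nat_of_neg_add_one (by simpa using h)
    (by simpa only [hf.apply_neg_add_one_add_half] using h), two_nsmul]
  simp only [hf.apply_neg_add_one_add_half, Int.cast_natCast]

end EvenSeries

lemma summable_add_half_pow_mul_exp_neg_mul_sq (k : ℕ) {c : ℝ} (hc : 0 < c) :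
    Summable fun n : ℕ => ((n : ℝ) + 1 / 2) ^ k * exp (-c * ((n : ℝ) + 1 / 2) ^ 2) := by
  have hshift : Summable fun n : ℕ => ((n : ℝ) + 1) ^ k * exp (-c * n) := by
    refine (((summable_nat_add_iff 1).mpr
      (summable_pow_mul_exp_neg_nat_mul k hc)).mul_left (exp c)).congr fun n => ?_
    push_cast
    rw [mul_left_comm, ← exp_add]
    ring_nf
  refine hshift.of_nonneg_of_le (fun n => by positivity) fun n => ?_
  have hn : (0 : ℝ) ≤ n := n.cast_nonneg
  gcongr ?_ * ?_
  · exact pow_le_pow_left₀ (by positivity) (by linarith) k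
  · exact exp_le_exp.mpr (by nlinarith [mul_nonneg hc.le (sq_nonneg (n : ℝ))])

noncomputable def theta2DerivTerm (k : ℕ) (y x : ℝ) : ℝ :=
  (-π * x ^ 2) ^ k * exp (-π * y * x ^ 2)

noncomputable def theta2Deriv (k : ℕ) (y : ℝ) : ℝ :=
  ∑' n : ℤ, theta2DerivTerm k y ((n : ℝ) + 1 / 2)

lemma theta2Deriv_zero : theta2Deriv 0 = theta2 := by
  funext y
  simp [theta2Deriv, theta2DerivTerm, theta2]

lemma theta2DerivTerm_even (k : ℕ) (y : ℝ) : (theta2DerivTerm k y).Even := fun x => by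
  simp only [theta2DerivTerm, neg_sq]

lemma theta2DerivTerm_eq_neg_pi_pow_mul (k : ℕ) (y x : ℝ) :
    theta2DerivTerm k y x = (-π) ^ k * (x ^ (2 * k) * exp (-(π * y) * x ^ 2)) := by
  rw [theta2DerivTerm, mul_pow, pow_mul]
  ring_nf

lemma abs_theta2DerivTerm_le (k : ℕ) {y z : ℝ} (hyz : y ≤ z) (x : ℝ) :
    |theta2DerivTerm k z x| ≤ |theta2DerivTerm k y x| := by
  simp only [theta2DerivTerm, abs_mul, abs_exp]
  gcongr _ * ?_
  exact exp_le_exp.mpr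
    (by nlinarith [mul_nonneg (mul_nonneg pi_pos.le (sub_nonneg.2 hyz)) (sq_nonneg x)])

lemma summable_theta2DerivTerm (k : ℕ) {y : ℝ} (hy : 0 < y) :
    Summable fun n : ℤ => theta2DerivTerm k y ((n : ℝ) + 1 / 2) := by
  refine (theta2DerivTerm_even k y).summable_int_add_half ?_
  simp only [theta2DerivTerm_eq_neg_pi_pow_mul]
  exact (summable_add_half_pow_mul_exp_neg_mul_sq _ (by positivity)).mul_left _

lemma hasDerivAt_theta2DerivTerm (k : ℕ) (y x : ℝ) :
    HasDerivAt (theta2DerivTerm k · x) (theta2DerivTerm (k + 1) y x) y := by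
  refine ((((hasDerivAt_id y).const_mul (-π)).mul_const (x ^ 2)).exp.const_mul
    ((-π * x ^ 2) ^ k)).congr_deriv ?_
  simp only [theta2DerivTerm, id]
  ring

lemma hasDerivAt_theta2Deriv (k : ℕ) {y : ℝ} (hy : 0 < y) :
    HasDerivAt (theta2Deriv k) (theta2Deriv (k + 1) y) y := by
  refine hasDerivAt_tsum_of_isPreconnected (summable_theta2DerivTerm (k + 1) (half_pos hy)).abs
    isOpen_Ioi isPreconnected_Ioi (fun n z _ => hasDerivAt_theta2DerivTerm k z _)
    (fun n z hz => abs_theta2DerivTerm_le (k + 1) (le_of_lt hz) _)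
    (Set.mem_Ioi.mpr (half_lt_self hy)) (summable_theta2DerivTerm k hy)
    (Set.mem_Ioi.mpr (half_lt_self hy))

lemma iteratedDeriv_theta2_s10 (k : ℕ) {y : ℝ} (hy : 0 < y) :
    iteratedDeriv k theta2 y = theta2Deriv k y := by
  induction k generalizing y with
  | zero => rw [iteratedDeriv_zero, theta2Deriv_zero]
  | succ k ih =>
    have hev : iteratedDeriv k theta2 =ᶠ[nhds y] theta2Deriv k :=
      Filter.eventually_of_mem (isOpen_Ioi.mem_nhds hy) fun z hz => ih hz
    rw [iteratedDeriv_succ, hev.deriv_eq, (hasDerivAt_theta2Deriv k hy).deriv]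

lemma theta2Deriv_eq_two_mul_tsum (k : ℕ) {y : ℝ} (hy : 0 < y) :
    theta2Deriv k y = 2 * (-π) ^ k *
      ∑' n : ℕ, ((n : ℝ) + 1 / 2) ^ (2 * k) * exp (-(π * y) * ((n : ℝ) + 1 / 2) ^ 2) := by
  rw [theta2Deriv, (theta2DerivTerm_even k y).tsum_int_add_half, nsmul_eq_mul, Nat.cast_ofNat]
  · simp only [theta2DerivTerm_eq_neg_pi_pow_mul, tsum_mul_left]
    ring
  · simp only [theta2DerivTerm_eq_neg_pi_pow_mul]
    exact (summable_add_half_pow_mul_exp_neg_mul_sq _ (by positivity)).mul_left _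

lemma tsum_le_div_one_sub_of_le_mul {a : ℕ → ℝ} {r : ℝ} (ha : ∀ n, 0 ≤ a n) (hr₀ : 0 ≤ r)
    (hr : r < 1) (h : ∀ n, a (n + 1) ≤ r * a n) : ∑' n, a n ≤ a 0 / (1 - r) := by
  have hgeom : ∀ n, a n ≤ a 0 * r ^ n := by
    intro n
    induction n with
    | zero => simp
    | succ n ih => calc
        a (n + 1) ≤ r * a n := h n
        _ ≤ r * (a 0 * r ^ n) := by gcongr
        _ = a 0 * r ^ (n + 1) := by ring
  have hsum := (hasSum_geometric_of_lt_one hr₀ hr).mul_left (a 0)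
  rw [← div_eq_mul_inv] at hsum
  exact hasSum_le hgeom (hsum.summable.of_nonneg_of_le ha hgeom).hasSum hsum

lemma pow_mul_exp_neg_mul_sq_add_one_le (k : ℕ) {c x₀ x : ℝ} (hc : 0 ≤ c) (hx₀ : 0 < x₀)
    (hx : x₀ ≤ x) :
    (x + 1) ^ k * exp (-c * (x + 1) ^ 2) ≤
      ((x₀ + 1) / x₀) ^ k * exp (-c * (2 * x₀ + 1)) * (x ^ k * exp (-c * x ^ 2)) := by
  have hx_nonneg : 0 ≤ x := hx₀.le.trans hx
  have hpow : (x + 1) ^ k ≤ ((x₀ + 1) / x₀) ^ k * x ^ k := by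
    rw [← mul_pow]
    refine pow_le_pow_left₀ (by linarith) ?_ k
    rw [div_mul_eq_mul_div, le_div_iff₀ hx₀]
    nlinarith
  have hexp : exp (-c * (x + 1) ^ 2) ≤ exp (-c * (2 * x₀ + 1)) * exp (-c * x ^ 2) := by
    rw [← exp_add]
    exact exp_le_exp.mpr (by nlinarith)
  calc (x + 1) ^ k * exp (-c * (x + 1) ^ 2)
      ≤ ((x₀ + 1) / x₀) ^ k * x ^ k * (exp (-c * (2 * x₀ + 1)) * exp (-c * x ^ 2)) :=
        mul_le_mul hpow hexp (by positivity) (by positivity [hx_nonneg])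
    _ = _ := by ring

lemma exp_neg_twelve_lt : exp (-12) < 1 / 150000 := by
  have h : (150000 : ℝ) < exp 12 := calc
    (150000 : ℝ) < 2.718 ^ 12 := by norm_num
    _ < exp 1 ^ 12 := by gcongr; linarith [exp_one_gt_d9]
    _ = exp 12 := by rw [← exp_nat_mul]; norm_num
  rw [exp_neg, one_div]
  exact (inv_lt_inv₀ (exp_pos _) (by norm_num)).mpr h

lemma tsum_add_half_pow_six_mul_exp_neg_mul_sq_lt {c : ℝ} (hc : 3 ≤ c) :
    ∑' n : ℕ, ((n : ℝ) + 1 / 2) ^ 6 * exp (-c * ((n : ℝ) + 1 / 2) ^ 2) <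
      exp (-c / 4) / 64 + (1 + 0.0003) * (729 / 64 * exp (-9 * c / 4)) := by
  set g : ℝ → ℝ := fun x => x ^ 6 * exp (-c * x ^ 2)
  set r : ℝ := ((3 / 2 + 1) / (3 / 2)) ^ 6 * exp (-c * (2 * (3 / 2) + 1))
  have hr : r < 0.0003 / 1.0003 := calc
    r ≤ ((3 / 2 + 1) / (3 / 2)) ^ 6 * exp (-12) := by
      simp only [r]
      gcongr
      linarith
    _ < _ := by have := exp_neg_twelve_lt; norm_num at this ⊢; linarith
  have htail : ∑' n : ℕ, g ((n + 1 : ℕ) + 1 / 2) ≤ g (3 / 2) / (1 - r) := by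
    refine (tsum_le_div_one_sub_of_le_mul (fun n => by positivity) (by positivity)
      (hr.trans (by norm_num)) fun n => ?_).trans_eq (by norm_num)
    rw [show ((n + 1 + 1 : ℕ) : ℝ) + 1 / 2 = ((n + 1 : ℕ) : ℝ) + 1 / 2 + 1 by push_cast; ring]
    exact pow_mul_exp_neg_mul_sq_add_one_le 6 (by positivity) (by norm_num)
      (by push_cast; linarith [n.cast_nonneg (α := ℝ)])
  have hfactor : g (3 / 2) / (1 - r) < (1 + 0.0003) * g (3 / 2) := by
    have hg_pos : 0 < g (3 / 2) := by positivity
    rw [lt_div_iff₀ (by norm_num)] at hr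
    rw [div_lt_iff₀ (by linarith)]
    nlinarith [mul_lt_mul_of_pos_left hr hg_pos]
  have hg0 : g ((0 : ℕ) + 1 / 2) = exp (-c / 4) / 64 := by
    simp only [g]
    rw [show -c * (((0 : ℕ) : ℝ) + 1 / 2) ^ 2 = -c / 4 by push_cast; ring]
    norm_num
    ring
  have hg1 : g (3 / 2) = 729 / 64 * exp (-9 * c / 4) := by
    simp only [g]
    rw [show -c * (3 / 2) ^ 2 = -9 * c / 4 by ring]
    norm_num
  have hsplit : ∑' n : ℕ, g (n + 1 / 2) =
      g ((0 : ℕ) + 1 / 2) + ∑' n : ℕ, g ((n + 1 : ℕ) + 1 / 2) :=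
    (summable_add_half_pow_mul_exp_neg_mul_sq 6 (by positivity)).tsum_eq_zero_add
  rw [hsplit, hg0, ← hg1]
  linarith

theorem theta2_third_deriv_upper_bound (y : ℝ) (hy : 1 ≤ y) :
    -iteratedDeriv 3 theta2 y < 2 * Real.pi ^ 3 * Real.exp (-Real.pi * y / 4) / 64 +
      2 * (1 + 0.0003) * 729 * Real.pi ^ 3 * Real.exp (-9 * Real.pi * y / 4) / 64 := by
  have hπy : 3 ≤ π * y := by nlinarith [pi_gt_three]
  rw [iteratedDeriv_theta2_s10 3 (by linarith), theta2Deriv_eq_two_mul_tsum 3 (by linarith)]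
  calc _ = 2 * π ^ 3 *
        ∑' n : ℕ, ((n : ℝ) + 1 / 2) ^ 6 * exp (-(π * y) * ((n : ℝ) + 1 / 2) ^ 2) := by
        norm_num
        ring
    _ < 2 * π ^ 3 * (exp (-(π * y) / 4) / 64 +
        (1 + 0.0003) * (729 / 64 * exp (-9 * (π * y) / 4))) := by
      gcongr
      exact tsum_add_half_pow_six_mul_exp_neg_mul_sq_lt hπy
    _ = _ := by ring_nf
end

section
/- For every y ≥ 1, the function g(y) = 2(e^{πy} − 1)² − 4πy e^{πy}(e^{πy} − 1) + π² y² e^{πy}(e^{πy} + 1) satisfies g(y) > 0. -/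
lemma g_pos_aux (t E : ℝ) (ht1 : (3.1415 : ℝ) < t) (hE : E = Real.exp t) :
    0 < 2 * (E - 1) ^ 2 - 4 * t * E * (E - 1) + t ^ 2 * E * (E + 1) := by
  have hEpos : 0 < E := hE ▸ Real.exp_pos t
  have hE1 : t + 1 ≤ E := by
    have := Real.add_one_le_exp t; rw [hE]; linarith
  have key : 0 < E ^ 2 * (t ^ 2 - 4 * t + 2) + E * (t ^ 2 + 4 * t - 4) + 2 := by
    rcases le_or_gt t 3.5 with h35 | h35
    · have hexp3 : Real.exp 3 ≤ 20.09 := by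
        have h1 : Real.exp 1 < 2.7182818286 := Real.exp_one_lt_d9
        have h3 : Real.exp 3 = Real.exp 1 * Real.exp 1 * Real.exp 1 := by
          rw [← Real.exp_add, ← Real.exp_add]; norm_num
        nlinarith [Real.exp_pos 1]
      have hb : E * (4 - t) ≤ 20.09 := by
        have h0 : E = Real.exp 3 * Real.exp (t - 3) := by
          rw [hE, ← Real.exp_add]; ring_nf
        have h1 : Real.exp (t - 3) * (4 - t) ≤ 1 := by
          have h2 : 1 - (t - 3) ≤ Real.exp (-(t - 3)) := by
            have := Real.add_one_le_exp (-(t - 3)); linarith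
          have h3 : Real.exp (t - 3) * Real.exp (-(t - 3)) = 1 := by
            rw [← Real.exp_add]; simp
          nlinarith [Real.exp_pos (t - 3)]
        calc E * (4 - t) = Real.exp 3 * (Real.exp (t - 3) * (4 - t)) := by
              rw [h0]; ring
          _ ≤ Real.exp 3 * 1 := by
              exact mul_le_mul_of_nonneg_left h1 (Real.exp_pos 3).le
          _ ≤ 20.09 := by linarith
      rcases le_or_gt (-t ^ 2 + 4 * t - 2) 0 with hc | hc
      · nlinarith [sq_nonneg E, mul_pos hEpos hEpos]
      · have hpoly : 20.09 * (-t ^ 2 + 4 * t - 2) ≤ (4 - t) * (t ^ 2 + 4 * t - 4) := by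
          nlinarith [sq_nonneg (t - 3.1415), sq_nonneg (3.5 - t),
            mul_nonneg (show (0:ℝ) ≤ t - 3.1415 by linarith) (show (0:ℝ) ≤ 3.5 - t by linarith)]
        have hkey : E * (-t ^ 2 + 4 * t - 2) ≤ t ^ 2 + 4 * t - 4 := by
          have h4 : 0 < 4 - t := by linarith
          have hm : E * (-t ^ 2 + 4 * t - 2) * (4 - t) ≤ (4 - t) * (t ^ 2 + 4 * t - 4) := by
            nlinarith [hb, hc.le]
          nlinarith
        nlinarith [mul_nonneg hEpos.le (sub_nonneg.2 hkey)]
    · nlinarith [mul_pos hEpos hEpos, sq_nonneg (t - 2),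
        mul_nonneg (mul_nonneg hEpos.le hEpos.le) (show (0:ℝ) ≤ t ^ 2 - 4 * t + 2 by nlinarith)]
  nlinarith [key]

theorem g_pos (y : ℝ) (hy : 1 ≤ y) :
    0 < 2 * (Real.exp (Real.pi * y) - 1) ^ 2 -
        4 * Real.pi * y * Real.exp (Real.pi * y) * (Real.exp (Real.pi * y) - 1) +
        Real.pi ^ 2 * y ^ 2 * Real.exp (Real.pi * y) * (Real.exp (Real.pi * y) + 1) := by
  have hπ : (3.1415 : ℝ) < Real.pi := by
    have := Real.pi_gt_d6; linarith
  have ht : (3.1415 : ℝ) < Real.pi * y := by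
    nlinarith [Real.pi_pos]
  have h := g_pos_aux (Real.pi * y) (Real.exp (Real.pi * y)) ht rfl
  nlinarith [h]
end

section
/- For every y ≥ 1, one has 2 y^{9/2} (ϑ₂'(y))² ϑ₂(y) − 2 y^{9/2} ϑ₂''(y) ϑ₂(y)² − 2 y^{11/2} (ϑ₂'(y))³ + 3 y^{11/2} ϑ₂''(y) ϑ₂'(y) ϑ₂(y) − y^{11/2} ϑ₂'''(y) ϑ₂(y)² > 0. -/
open Real Finset Filter Topology

namespace Theta2

section ExpSum

variable {ι : Type*} {ℓ : ι → ℝ}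

noncomputable def expSum (ℓ : ι → ℝ) (k : ℕ) (y : ℝ) : ℝ :=
  ∑' n, (-ℓ n) ^ k * exp (-y * ℓ n)

lemma summable_pow_mul_exp_neg_mul (hℓ : ∀ n, 0 ≤ ℓ n)
    (hsum : ∀ a, 0 < a → Summable fun n => exp (-a * ℓ n)) (k : ℕ) {a : ℝ} (ha : 0 < a) :
    Summable fun n => ℓ n ^ k * exp (-a * ℓ n) := by
  refine .of_nonneg_of_le (fun n => by have := hℓ n; positivity) (fun n => ?_)
    ((hsum (a / 2) (by positivity)).mul_left ((2 / a) ^ k * k.factorial))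
  have h := pow_div_factorial_le_exp _ (mul_nonneg (by positivity : 0 ≤ a / 2) (hℓ n)) k
  rw [div_le_iff₀ (by positivity)] at h
  calc ℓ n ^ k * exp (-a * ℓ n) = (2 / a) ^ k * (a / 2 * ℓ n) ^ k * exp (-a * ℓ n) := by
        rw [← mul_pow]; field_simp
    _ ≤ (2 / a) ^ k * (exp (a / 2 * ℓ n) * k.factorial) * exp (-a * ℓ n) := by gcongr
    _ = (2 / a) ^ k * k.factorial * exp (-(a / 2) * ℓ n) := by
        rw [mul_comm (exp _), mul_assoc, mul_assoc, ← exp_add]; ring_nf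

lemma summable_expSum_term (hℓ : ∀ n, 0 ≤ ℓ n)
    (hsum : ∀ a, 0 < a → Summable fun n => exp (-a * ℓ n)) (k : ℕ) {a : ℝ} (ha : 0 < a) :
    Summable fun n => (-ℓ n) ^ k * exp (-a * ℓ n) := by
  refine ((summable_pow_mul_exp_neg_mul hℓ hsum k ha).mul_left ((-1) ^ k)).congr fun n => ?_
  rw [neg_pow (ℓ n), mul_assoc]

lemma hasDerivAt_expSum (hℓ : ∀ n, 0 ≤ ℓ n)
    (hsum : ∀ a, 0 < a → Summable fun n => exp (-a * ℓ n)) (k : ℕ) {y : ℝ} (hy : 0 < y) :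
    HasDerivAt (expSum ℓ k) (expSum ℓ (k + 1) y) y := by
  refine hasDerivAt_tsum_of_isPreconnected (t := Set.Ioi (y / 2)) (y₀ := y)
    (g := fun n z => (-ℓ n) ^ k * exp (-z * ℓ n))
    (g' := fun n z => (-ℓ n) ^ (k + 1) * exp (-z * ℓ n))
    (summable_pow_mul_exp_neg_mul hℓ hsum (k + 1) (half_pos hy)) isOpen_Ioi isPreconnected_Ioi
    (fun n z _ => ?_) (fun n z hz => ?_) (half_lt_self hy)
    (summable_expSum_term hℓ hsum k hy) (half_lt_self hy)
  · exact ((((hasDerivAt_neg' z).mul_const (ℓ n)).exp).const_mul ((-ℓ n) ^ k)).congr_deriv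
      (by ring)
  · rw [norm_mul, norm_pow, norm_neg, norm_of_nonneg (hℓ n), norm_of_nonneg (exp_pos _).le]
    have := hℓ n
    gcongr
    exact hz.le

lemma iteratedDeriv_expSum (hℓ : ∀ n, 0 ≤ ℓ n)
    (hsum : ∀ a, 0 < a → Summable fun n => exp (-a * ℓ n)) (k : ℕ) {y : ℝ} (hy : 0 < y) :
    iteratedDeriv k (expSum ℓ 0) y = expSum ℓ k y := by
  induction k generalizing y with
  | zero => rfl
  | succ k ih =>
    have h : iteratedDeriv k (expSum ℓ 0) =ᶠ[𝓝 y] expSum ℓ k :=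
      (eventually_gt_nhds hy).mono fun z hz => ih hz
    rw [iteratedDeriv_succ, h.deriv_eq]
    exact (hasDerivAt_expSum hℓ hsum k hy).deriv

lemma expSum_add_const (hℓ : ∀ n, 0 ≤ ℓ n)
    (hsum : ∀ a, 0 < a → Summable fun n => exp (-a * ℓ n)) (c : ℝ) (k : ℕ) {y : ℝ} (hy : 0 < y) :
    expSum (fun n => ℓ n + c) k y =
      exp (-c * y) * ∑ m ∈ range (k + 1), k.choose m * (-c) ^ (k - m) * expSum ℓ m y := by
  simp only [expSum, mul_sum, ← tsum_mul_left]
  rw [← Summable.tsum_finsetSum fun m _ =>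
    ((summable_expSum_term hℓ hsum m hy).mul_left _).mul_left _]
  congr 1 with n
  rw [neg_add, add_pow, mul_add, exp_add, sum_mul]
  congr 1 with m
  ring_nf

end ExpSum

section Combination

def combination (P f₀ f₁ f₂ f₃ : ℝ) : ℝ :=
  2 * f₁ ^ 2 * f₀ - 2 * f₂ * f₀ ^ 2 + P * (-2 * f₁ ^ 3 + 3 * f₂ * f₁ * f₀ - f₃ * f₀ ^ 2)

lemma combination_expSum_add_const {ι : Type*} {ℓ : ι → ℝ} (hℓ : ∀ n, 0 ≤ ℓ n)
    (hsum : ∀ a, 0 < a → Summable fun n => exp (-a * ℓ n)) (c P : ℝ) {y : ℝ} (hy : 0 < y) :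
    combination P (expSum (fun n => ℓ n + c) 0 y) (expSum (fun n => ℓ n + c) 1 y)
        (expSum (fun n => ℓ n + c) 2 y) (expSum (fun n => ℓ n + c) 3 y) =
      exp (-c * y) ^ 3 *
        combination P (expSum ℓ 0 y) (expSum ℓ 1 y) (expSum ℓ 2 y) (expSum ℓ 3 y) := by
  simp only [expSum_add_const hℓ hsum c _ hy, sum_range_succ, sum_range_zero, combination]
  simp only [Nat.choose_zero_right, Nat.choose_one_right, Nat.choose_self,
    Nat.choose_succ_self_right, Nat.cast_ofNat, Nat.cast_one]
  ring

lemma combination_pos {P x f₀ f₁ f₂ f₃ : ℝ} (hP : P ≤ -3) (hx : 0 < x) (hx' : x ≤ 1 / 16)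
    (h₀ : 1 ≤ f₀) (h₁ : 0 ≤ f₁) (h₁' : f₁ ≤ 9 / 4 * x) (h₂ : f₂ ≤ 9 / 2 * x) (h₃ : 8 * x ≤ f₃) :
    0 < combination P f₀ f₁ f₂ f₃ := by
  have h₂₁ : 3 * (f₂ * f₁) ≤ 2 * x := by
    have : f₂ * f₁ ≤ 9 / 2 * x * (9 / 4 * x) := mul_le_mul h₂ h₁' h₁ (by positivity)
    nlinarith
  have hcubic : 6 * x * f₀ ^ 2 ≤ f₃ * f₀ ^ 2 - 3 * f₂ * f₁ * f₀ + 2 * f₁ ^ 3 := by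
    have : 6 * x * f₀ ≤ f₃ * f₀ - 3 * (f₂ * f₁) := by nlinarith
    nlinarith [pow_nonneg h₁ 3]
  have hquad : -(9 * x * f₀ ^ 2) ≤ 2 * f₁ ^ 2 * f₀ - 2 * f₂ * f₀ ^ 2 := by
    nlinarith [sq_nonneg f₁]
  have hP' : 3 * (6 * x * f₀ ^ 2) ≤ -P * (f₃ * f₀ ^ 2 - 3 * f₂ * f₁ * f₀ + 2 * f₁ ^ 3) :=
    mul_le_mul (by linarith) hcubic (by positivity) (by linarith)
  have : 0 < x * f₀ ^ 2 := by positivity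
  unfold combination
  linarith

end Combination

section RatioBound

variable {u : ℕ → ℝ} {r : ℝ}

lemma summable_of_succ_le_mul (hu : ∀ n, 0 ≤ u n) (hr₀ : 0 ≤ r) (hr : r < 1)
    (h : ∀ n, u (n + 1) ≤ r * u n) : Summable u :=
  .of_nonneg_of_le hu (fun n => le_geom hr₀ n fun k _ => h k)
    ((summable_geometric_of_lt_one hr₀ hr).mul_right _)

lemma tsum_le_div_of_succ_le_mul (hu : ∀ n, 0 ≤ u n) (hr₀ : 0 ≤ r) (hr : r < 1)
    (h : ∀ n, u (n + 1) ≤ r * u n) : ∑' n, u n ≤ u 0 / (1 - r) := by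
  calc ∑' n, u n ≤ ∑' n, r ^ n * u 0 :=
        (summable_of_succ_le_mul hu hr₀ hr h).tsum_le_tsum (fun n => le_geom hr₀ n fun k _ => h k)
          ((summable_geometric_of_lt_one hr₀ hr).mul_right _)
    _ = u 0 / (1 - r) := by
        rw [tsum_mul_right, tsum_geometric_of_lt_one hr₀ hr, inv_mul_eq_div]

end RatioBound

section PronicSeries

noncomputable def pronicTerm (j : ℕ) (q : ℝ) (n : ℕ) : ℝ :=
  ((n * (n + 1) : ℕ) : ℝ) ^ j * q ^ (n * (n + 1))

noncomputable def pronicSeries (j : ℕ) (q : ℝ) : ℝ :=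
  ∑' n, pronicTerm j q n

variable {j : ℕ} {q : ℝ}

lemma pronicTerm_nonneg (hq : 0 ≤ q) (n : ℕ) : 0 ≤ pronicTerm j q n := by
  unfold pronicTerm; positivity

lemma pronicTerm_succ_le (hq₀ : 0 ≤ q) (hq₁ : q ≤ 1) (n : ℕ) :
    pronicTerm j q (n + 2) ≤ 3 ^ j * q ^ 4 * pronicTerm j q (n + 1) := by
  have hcast : (((n + 2) * (n + 2 + 1) : ℕ) : ℝ) ≤ 3 * (((n + 1) * (n + 1 + 1) : ℕ) : ℝ) := by
    push_cast; nlinarith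
  have hpow : q ^ ((n + 2) * (n + 2 + 1)) = q ^ ((n + 1) * (n + 1 + 1)) * q ^ (2 * n + 4) := by
    rw [← pow_add]; ring_nf
  have hq : q ^ (2 * n + 4) ≤ q ^ 4 := pow_le_pow_of_le_one hq₀ hq₁ (by omega)
  unfold pronicTerm
  rw [hpow]
  calc (((n + 2) * (n + 2 + 1) : ℕ) : ℝ) ^ j * (q ^ ((n + 1) * (n + 1 + 1)) * q ^ (2 * n + 4))
      ≤ (3 * (((n + 1) * (n + 1 + 1) : ℕ) : ℝ)) ^ j * (q ^ ((n + 1) * (n + 1 + 1)) * q ^ 4) := by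
        gcongr
    _ = _ := by ring

lemma le_one_of_three_pow_mul_pow_four_lt_one (hq₀ : 0 ≤ q) (h : 3 ^ j * q ^ 4 < 1) : q ≤ 1 := by
  refine (pow_le_one_iff_of_nonneg hq₀ four_ne_zero).mp ?_
  nlinarith [one_le_pow₀ (M₀ := ℝ) (a := 3) (by norm_num) (n := j), pow_nonneg hq₀ 4]

lemma summable_pronicTerm (hq₀ : 0 ≤ q) (h : 3 ^ j * q ^ 4 < 1) : Summable (pronicTerm j q) :=
  have hq₁ := le_one_of_three_pow_mul_pow_four_lt_one hq₀ h
  (summable_nat_add_iff 1).mp <| summable_of_succ_le_mul (fun n => pronicTerm_nonneg hq₀ _)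
    (by positivity) h (fun n => pronicTerm_succ_le hq₀ hq₁ n)

lemma pronicSeries_le (hq₀ : 0 ≤ q) (h : 3 ^ j * q ^ 4 < 1) :
    pronicSeries j q ≤ 0 ^ j + 2 ^ j * q ^ 2 / (1 - 3 ^ j * q ^ 4) := by
  have hq₁ := le_one_of_three_pow_mul_pow_four_lt_one hq₀ h
  rw [pronicSeries, (summable_pronicTerm hq₀ h).tsum_eq_zero_add]
  gcongr
  · simp [pronicTerm]
  · refine (tsum_le_div_of_succ_le_mul (fun n => pronicTerm_nonneg hq₀ _) (by positivity) h
      (fun n => pronicTerm_succ_le hq₀ hq₁ n)).trans_eq ?_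
    simp [pronicTerm]

lemma le_pronicSeries (hq₀ : 0 ≤ q) (h : 3 ^ j * q ^ 4 < 1) :
    0 ^ j + 2 ^ j * q ^ 2 ≤ pronicSeries j q := by
  refine ((summable_pronicTerm hq₀ h).sum_le_tsum (range 2)
    (fun n _ => pronicTerm_nonneg hq₀ n)).trans_eq' ?_
  norm_num [pronicTerm, sum_range_succ]

lemma three_pow_mul_pow_four_le (hj : j ≤ 3) (hq₀ : 0 ≤ q) (hq : q ≤ 1 / 4) :
    3 ^ j * q ^ 4 ≤ 1 / 9 :=
  calc 3 ^ j * q ^ 4 ≤ 3 ^ 3 * (1 / 4) ^ 4 :=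
        mul_le_mul (pow_le_pow_right₀ (by norm_num) hj) (pow_le_pow_left₀ hq₀ hq 4)
          (by positivity) (by norm_num)
    _ ≤ 1 / 9 := by norm_num

lemma pronicSeries_le_of_le_quarter (hj : j ≤ 3) (hq₀ : 0 ≤ q) (hq : q ≤ 1 / 4) :
    pronicSeries j q ≤ 0 ^ j + 9 / 8 * 2 ^ j * q ^ 2 := by
  have hρ := three_pow_mul_pow_four_le hj hq₀ hq
  refine (pronicSeries_le hq₀ (by linarith)).trans ?_
  gcongr 0 ^ j + ?_
  rw [div_le_iff₀ (by linarith)]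
  have := mul_le_mul_of_nonneg_left hρ (by positivity : (0 : ℝ) ≤ 9 / 8 * 2 ^ j * q ^ 2)
  linarith

noncomputable def pronicExponent (n : ℤ) : ℝ := π * (n * (n + 1))

lemma pronicExponent_nonneg (n : ℤ) : 0 ≤ pronicExponent n := by
  unfold pronicExponent
  rcases le_or_gt 0 n with h | h
  · have : (0 : ℝ) ≤ n := by exact_mod_cast h
    positivity
  · have : (n : ℝ) + 1 ≤ 0 := by exact_mod_cast h
    exact mul_nonneg pi_pos.le (mul_nonneg_of_nonpos_of_nonpos (by linarith) this)

lemma hasSum_pronicExponent {y : ℝ} (h : 3 ^ j * exp (-(π * y)) ^ 4 < 1) :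
    HasSum (fun n => (-pronicExponent n) ^ j * exp (-y * pronicExponent n))
      (2 * ((-π) ^ j * pronicSeries j (exp (-(π * y))))) := by
  have hnat : ∀ n : ℕ, (-pronicExponent n) ^ j * exp (-y * pronicExponent n) =
      (-π) ^ j * pronicTerm j (exp (-(π * y))) n := by
    intro n
    rw [pronicTerm, ← exp_nat_mul, pronicExponent, ← neg_mul, mul_pow]
    push_cast
    ring_nf
  have hsymm : ∀ n : ℕ, pronicExponent (-(n + 1)) = pronicExponent n := by
    intro n; simp only [pronicExponent]; push_cast; ring
  have hs : HasSum (fun n : ℕ => (-pronicExponent n) ^ j * exp (-y * pronicExponent n))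
      ((-π) ^ j * pronicSeries j (exp (-(π * y)))) := by
    simp only [hnat]
    exact ((summable_pronicTerm (exp_pos _).le h).hasSum).mul_left _
  rw [two_mul]
  exact hs.of_nat_of_neg_add_one (by simpa only [hsymm] using hs)

lemma summable_exp_neg_mul_pronicExponent {a : ℝ} (ha : 0 < a) :
    Summable fun n => exp (-a * pronicExponent n) := by
  have h : 3 ^ 0 * exp (-(π * a)) ^ 4 < 1 := by
    rw [pow_zero, one_mul]
    exact pow_lt_one₀ (exp_pos _).le (exp_lt_one_iff.mpr (by nlinarith [pi_pos])) four_ne_zero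
  simpa using (hasSum_pronicExponent h).summable

end PronicSeries

lemma theta2_eq_expSum : theta2 = expSum (fun n => pronicExponent n + π / 4) 0 := by
  funext y
  simp only [theta2, expSum, pow_zero, one_mul, pronicExponent]
  congr 1 with n
  ring_nf

lemma iteratedDeriv_theta2 (k : ℕ) {y : ℝ} (hy : 0 < y) :
    iteratedDeriv k theta2 y = expSum (fun n => pronicExponent n + π / 4) k y := by
  refine theta2_eq_expSum ▸ iteratedDeriv_expSum (fun n => ?_) (fun a ha => ?_) k hy
  · exact add_nonneg (pronicExponent_nonneg n) (by positivity)
  · refine ((summable_exp_neg_mul_pronicExponent ha).mul_left (exp (-a * (π / 4)))).congr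
      fun n => ?_
    rw [← exp_add]; ring_nf

lemma exp_neg_pi_mul_le_quarter {y : ℝ} (hy : 1 ≤ y) : exp (-(π * y)) ≤ 1 / 4 := by
  rw [exp_neg, inv_le_comm₀ (exp_pos _) (by norm_num)]
  nlinarith [add_one_le_exp (π * y), pi_gt_three]

lemma expSum_pronicExponent {j : ℕ} (hj : j ≤ 3) {y : ℝ} (hy : 1 ≤ y) :
    expSum pronicExponent j y = 2 * ((-π) ^ j * pronicSeries j (exp (-(π * y)))) :=
  (hasSum_pronicExponent (by
    linarith [three_pow_mul_pow_four_le hj (exp_pos _).le (exp_neg_pi_mul_le_quarter hy)])).tsum_eq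

lemma combination_pronicSeries_pos {P q : ℝ} (hP : P ≤ -3) (hq₀ : 0 < q) (hq : q ≤ 1 / 4) :
    0 < combination P (pronicSeries 0 q) (pronicSeries 1 q) (pronicSeries 2 q)
      (pronicSeries 3 q) := by
  have hlow {j : ℕ} (hj : j ≤ 3) : 0 ^ j + 2 ^ j * q ^ 2 ≤ pronicSeries j q :=
    le_pronicSeries hq₀.le (by linarith [three_pow_mul_pow_four_le hj hq₀.le hq])
  have h₀ := hlow (j := 0) (by norm_num)
  have h₁ := hlow (j := 1) (by norm_num)
  have h₃ := hlow (j := 3) (by norm_num)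
  have h₁' := pronicSeries_le_of_le_quarter (j := 1) (by norm_num) hq₀.le hq
  have h₂ := pronicSeries_le_of_le_quarter (j := 2) (by norm_num) hq₀.le hq
  norm_num at h₀ h₁ h₃ h₁' h₂
  exact combination_pos (x := q ^ 2) hP (by positivity) (by nlinarith) (by nlinarith)
    (by nlinarith) (by linarith) (by linarith) (by linarith)

lemma combination_theta2 {y : ℝ} (hy : 1 ≤ y) :
    combination y (theta2 y) (deriv theta2 y) (iteratedDeriv 2 theta2 y)
        (iteratedDeriv 3 theta2 y) =
      exp (-(π / 4) * y) ^ 3 * (2 ^ 3 * π ^ 2 * combination (-π * y)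
        (pronicSeries 0 (exp (-(π * y)))) (pronicSeries 1 (exp (-(π * y))))
        (pronicSeries 2 (exp (-(π * y)))) (pronicSeries 3 (exp (-(π * y))))) := by
  have hy₀ : 0 < y := by linarith
  have hθ := iteratedDeriv_theta2 0 hy₀
  rw [iteratedDeriv_zero] at hθ
  rw [← iteratedDeriv_one, hθ, iteratedDeriv_theta2 1 hy₀, iteratedDeriv_theta2 2 hy₀,
    iteratedDeriv_theta2 3 hy₀, combination_expSum_add_const pronicExponent_nonneg
      (fun a ha => summable_exp_neg_mul_pronicExponent ha) _ _ hy₀,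
    expSum_pronicExponent (j := 0) (by norm_num) hy, expSum_pronicExponent (j := 1) (by norm_num) hy,
    expSum_pronicExponent (j := 2) (by norm_num) hy, expSum_pronicExponent (j := 3) (by norm_num) hy]
  simp only [combination]
  ring

end Theta2

open Theta2

theorem theta2_combination_pos (y : ℝ) (hy : 1 ≤ y) :
    0 < 2 * y ^ ((9 : ℝ) / 2) * deriv theta2 y ^ 2 * theta2 y -
        2 * y ^ ((9 : ℝ) / 2) * iteratedDeriv 2 theta2 y * theta2 y ^ 2 -
        2 * y ^ ((11 : ℝ) / 2) * deriv theta2 y ^ 3 +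
        3 * y ^ ((11 : ℝ) / 2) * iteratedDeriv 2 theta2 y * deriv theta2 y * theta2 y -
        y ^ ((11 : ℝ) / 2) * iteratedDeriv 3 theta2 y * theta2 y ^ 2 := by
  have hy₀ : 0 < y := by linarith
  have hpos := combination_pronicSeries_pos (P := -π * y) (by nlinarith [pi_gt_three])
    (exp_pos _) (exp_neg_pi_mul_le_quarter hy)
  calc
    0 < y ^ ((9 : ℝ) / 2) * combination y (theta2 y) (deriv theta2 y)
        (iteratedDeriv 2 theta2 y) (iteratedDeriv 3 theta2 y) := by
      rw [combination_theta2 hy]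
      exact mul_pos (rpow_pos_of_pos hy₀ _) (mul_pos (by positivity) (mul_pos (by positivity) hpos))
    _ = _ := by
      rw [show (11 : ℝ) / 2 = 9 / 2 + 1 by norm_num, rpow_add hy₀, rpow_one]
      simp only [combination]
      ring
end
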